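/- arXiv:1905.06093 — 9 statements merged into one kernel-verified Lean document; each statement's English description precedes it below -/
import Mathlib

section
/- Let X be a compact metrizable space with metric d, let 0 ∈ X, and let f : X → X be continuous. If f^n(x) → 0 as n → ∞ for every x ∈ X, then for every ε > 0 there exists N ∈ ℕ such that for every x ∈ X there is some n ≤ N with d(f^n(x), 0) < ε. -/
open Filter Set

/-! The preimages `(f^[n])⁻¹' (ball z ε)` form an open cover of `X`, since every orbit
enters the ball; by compactness finitely many of them already cover `X`, and the largest
of their indices is the uniform bound. -/

theorem CompactSpace.exists_forall_exists_le_mem {X : Type*} [TopologicalSpace X]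
    [CompactSpace X] {U : ℕ → Set X} (hU : ∀ n, IsOpen (U n)) (hcover : ∀ x, ∃ n, x ∈ U n) :
    ∃ N, ∀ x, ∃ n ≤ N, x ∈ U n := by
  obtain ⟨N, hN⟩ := isCompact_univ.elim_directed_cover (accumulate U)
    (fun n => isOpen_biUnion fun k _ => hU k)
    (fun x _ => by simpa only [iUnion_accumulate, mem_iUnion] using hcover x)
    monotone_accumulate.directed_le
  exact ⟨N, fun x => mem_accumulate.1 (hN (mem_univ x))⟩

theorem Continuous.exists_forall_exists_iterate_mem {X : Type*} [TopologicalSpace X]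
    [CompactSpace X] {f : X → X} (hf : Continuous f) {U : Set X} (hU : IsOpen U)
    (hvisit : ∀ x, ∃ n, f^[n] x ∈ U) : ∃ N, ∀ x, ∃ n ≤ N, f^[n] x ∈ U :=
  CompactSpace.exists_forall_exists_le_mem (fun n => hU.preimage (hf.iterate n)) hvisit

/-- If every orbit of a continuous map on a compact metrizable
space converges to `0`, then the time before entering any `ε`-ball around `0`
is bounded uniformly over the space. -/
theorem syndetically_close_of_asymptotically_nilpotent
    {X : Type*} [MetricSpace X] [CompactSpace X]
    (f : X → X) (hf : Continuous f) (z : X)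
    (hnil : ∀ x : X, Tendsto (fun n => f^[n] x) atTop (nhds z)) :
    ∀ ε > 0, ∃ N : ℕ, ∀ x : X, ∃ n ≤ N, dist (f^[n] x) z < ε := by
  intro ε hε
  have hvisit : ∀ x, ∃ n, f^[n] x ∈ Metric.ball z ε := fun x =>
    ((hnil x).eventually (Metric.ball_mem_nhds z hε)).exists
  exact hf.exists_forall_exists_iterate_mem Metric.isOpen_ball hvisit
end

section
/- Let G be a group acting transitively on a set T such that for every t ∈ T, every orbit of the stabilizer subgroup Stab_G(t) on T is finite. Let A be a finite alphabet and let f : A^T → A^T be continuous and commute with the induced G-action on configurations. Then f has nice local rules: for every t' ∈ T the set {t ∈ T : ∃ x, y ∈ A^T with x_u = y_u for all u ≠ t and f(x)_{t'} ≠ f(y)_{t'}} is finite, and for every t ∈ T the set {t' ∈ T : ∃ x, y ∈ A^T with x_u = y_u for all u ≠ t and f(x)_{t'} ≠ f(y)_{t'}} is finite. -/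
/-!
Continuity and compactness of `A^T` make each output coordinate of `f` depend on finitely many
input coordinates, so every `t'` is influenced by only finitely many `t`. For the converse
direction, equivariance lets us move an edge `t → t'` to an edge `s → t` ending at `t`; there are
finitely many such `s`, and for each of them the possible `t'` form a single orbit of the
stabilizer of `t`, which is finite.
-/

open Filter Topology

/-- Each fibre of `φ` contains a box around each of its points, and finitely many such boxes cover
the product. -/
theorem Continuous.exists_finset_dependsOn {ι B : Type*} {X : ι → Type*}
    [∀ i, TopologicalSpace (X i)] [CompactSpace (∀ i, X i)]
    [TopologicalSpace B] [DiscreteTopology B] {φ : (∀ i, X i) → B} (hφ : Continuous φ) :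
    ∃ S : Finset ι, DependsOn φ S := by
  classical
  have hfibre : ∀ x, φ ⁻¹' {φ x} ∈ 𝓝 x := fun x =>
    hφ.continuousAt (by rw [nhds_discrete]; exact mem_pure.2 rfl)
  simp only [nhds_pi, mem_pi'] at hfibre
  choose I U hU hbox using hfibre
  obtain ⟨F, -, hcover⟩ := isCompact_univ.elim_nhds_subcover (fun x => (I x : Set ι).pi (U x))
    fun x _ => set_pi_mem_nhds (I x).finite_toSet fun i _ => hU x i
  refine ⟨F.biUnion I, fun y z hyz => ?_⟩
  obtain ⟨x, hxF, hy⟩ := Set.mem_iUnion₂.1 (hcover (Set.mem_univ y))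
  have hz : z ∈ (I x : Set ι).pi (U x) := fun i hi =>
    hyz i (Finset.mem_biUnion.2 ⟨x, hxF, hi⟩) ▸ hy i hi
  exact (hbox x hy).trans (hbox x hz).symm

theorem finite_setOf_rel_of_finite_setOf_rel_flip {G T : Type*} [Group G] [MulAction G T]
    {R : T → T → Prop} (hR : ∀ (g : G) (t t' : T), R t t' → R (g • t) (g • t')) {t : T}
    (htrans : ∀ s : T, ∃ g : G, g • s = t)
    (horb : ∀ s : T, {u : T | ∃ g : G, g • t = t ∧ g • s = u}.Finite)
    (hin : {s | R s t}.Finite) : {t' | R t t'}.Finite := by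
  choose k hk using htrans
  refine (hin.biUnion fun s _ => horb (k s • t)).subset fun t' ht' => ?_
  set s := k t' • t
  have hs : R s t := by simpa only [hk t'] using hR (k t') t t' ht'
  refine Set.mem_biUnion hs ⟨(k s * k t')⁻¹, inv_smul_eq_iff.2 ?_, inv_smul_eq_iff.2 ?_⟩
  · rw [mul_smul, hk s]
  · rw [mul_smul, hk t']

section Influences

variable {G T A : Type*}

/-- The edge relation of the dependency graph of `f`. -/
def Influences (f : (T → A) → (T → A)) (t t' : T) : Prop :=
  ∃ x y : T → A, (∀ u, u ≠ t → x u = y u) ∧ f x t' ≠ f y t'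

variable {f : (T → A) → (T → A)}

theorem setOf_influences_subset {t' : T} {S : Set T} (hS : DependsOn (fun x => f x t') S) :
    {t | Influences f t t'} ⊆ S := by
  rintro t ⟨x, y, hxy, hne⟩
  by_contra ht
  exact hne (hS fun u hu => hxy u (by rintro rfl; exact ht hu))

theorem Influences.smul [Group G] [MulAction G T]
    (hcomm : ∀ (g : G) (x : T → A), f (fun t => x (g⁻¹ • t)) = fun t => f x (g⁻¹ • t))
    {t t' : T} (h : Influences f t t') (g : G) : Influences f (g • t) (g • t') := by
  obtain ⟨x, y, hxy, hne⟩ := h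
  refine ⟨fun u => x (g⁻¹ • u), fun u => y (g⁻¹ • u), fun u hu => hxy _ ?_, ?_⟩
  · exact fun h => hu (inv_smul_eq_iff.1 h)
  · simpa only [hcomm, inv_smul_smul] using hne

end Influences

/-- If a group `G` acts transitively on `T` and all orbits of
all point stabilizers are finite, then every continuous `G`-commuting map on
`A^T` has nice local rules: the dependency graph (with an edge `(t, t')` when
changing a configuration only at `t` can change the image at `t'`) is locally
finite on both sides. -/
theorem nice_local_rules_of_transitive_finite_stabilizer_orbits
    {G T A : Type*} [Group G] [MulAction G T] [Finite A]
    [TopologicalSpace A] [DiscreteTopology A]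
    (htrans : ∀ t t' : T, ∃ g : G, g • t = t')
    (horb : ∀ t t' : T, {s : T | ∃ g : G, g • t = t ∧ g • t' = s}.Finite)
    (f : (T → A) → (T → A)) (hf : Continuous f)
    (hcomm : ∀ (g : G) (x : T → A),
      f (fun t => x (g⁻¹ • t)) = fun t => f x (g⁻¹ • t)) :
    (∀ t' : T,
      {t : T | ∃ x y : T → A, (∀ u, u ≠ t → x u = y u) ∧ f x t' ≠ f y t'}.Finite) ∧
    (∀ t : T,
      {t' : T | ∃ x y : T → A, (∀ u, u ≠ t → x u = y u) ∧ f x t' ≠ f y t'}.Finite) := by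
  have hin : ∀ t', {t | Influences f t t'}.Finite := fun t' => by
    obtain ⟨S, hS⟩ := ((continuous_apply t').comp hf).exists_finset_dependsOn
    exact S.finite_toSet.subset (setOf_influences_subset hS)
  exact ⟨hin, fun t => finite_setOf_rel_of_finite_setOf_rel_flip
    (fun g _ _ h => h.smul hcomm g) (fun s => htrans s t) (horb t) (hin t)⟩
end

section
/- Let G be a group acting transitively on a countable set T, let A be a finite alphabet with distinguished symbol 0, and let f : A^T → A^T be a cellular automaton on G ↷ T with nice local rules. If f is asymptotically nilpotent toward 0^T and the set of finite mortal configurations is dense in A^T, then f is uniformly asymptotically nilpotent: for every finite set B ⊆ T there exists n ∈ ℕ such that f^m(x)_t = 0 for all m ≥ n, all x ∈ A^T, and all t ∈ B. -/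
/-!
Fix a cell `t₀`. The closed sets "`f^m x` vanishes at `t₀` for all `m ≥ N`" cover `A^T`, so by
Baire one of them contains a cylinder, and by density that cylinder contains a finite configuration
`y` with `f^δ y = 0^T`. As `f` fixes `0^T` and dependencies are finite in both directions, there is
a finite set `E` such that for every `y'` vanishing on `E`, overwriting `y'` by `y` on the cylinder's
base and the support of `y` does not change `f^δ y'`; hence every such `y'` vanishes at `t₀` from
time `N + δ` on. By compactness, every configuration enters the cylinder "zero on `E`" within a
uniform time, which makes the convergence at `t₀` uniform.
-/

open Filter Function Set Topology

lemma exists_finset_forall_eq_mem {T A : Type*} [TopologicalSpace A] {U : Set (T → A)}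
    (hU : IsOpen U) {y : T → A} (hy : y ∈ U) :
    ∃ I : Finset T, ∀ x, (∀ u ∈ I, x u = y u) → x ∈ U := by
  obtain ⟨I, V, hV, hsub⟩ := isOpen_pi_iff.mp hU y hy
  exact ⟨I, fun x hx => hsub fun u hu => (hx u hu).symm ▸ (hV u hu).2⟩

lemma exists_nonempty_interior_of_eventually_eq {X A : Type*} [TopologicalSpace X] [BaireSpace X]
    [Nonempty X] [TopologicalSpace A] [T1Space A] {φ : ℕ → X → A} (hφ : ∀ m, Continuous (φ m))
    {z : A} (h : ∀ x, ∀ᶠ m in atTop, φ m x = z) :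
    ∃ N, (interior {x | ∀ m ≥ N, φ m x = z}).Nonempty := by
  refine nonempty_interior_of_iUnion_of_closed (fun N => ?_)
    (eq_univ_of_forall fun x => mem_iUnion.2 (eventually_atTop.1 (h x)))
  simp only [ofPred_forall]
  exact isClosed_iInter fun m => isClosed_iInter fun _ => isClosed_singleton.preimage (hφ m)

lemma exists_forall_exists_le_iterate_mem {X : Type*} [TopologicalSpace X] [CompactSpace X]
    {g : X → X} (hg : Continuous g) {W : Set X} (hW : IsOpen W) (h : ∀ x, ∃ n, g^[n] x ∈ W) :
    ∃ N, ∀ x, ∃ n ≤ N, g^[n] x ∈ W := by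
  obtain ⟨s, hs⟩ := isCompact_univ.elim_finite_subcover (fun n => g^[n] ⁻¹' W)
    (fun n => hW.preimage (hg.iterate n)) fun x _ => mem_iUnion.2 (h x)
  refine ⟨s.sup id, fun x => ?_⟩
  obtain ⟨n, hn, hx⟩ := mem_iUnion₂.1 (hs (mem_univ x))
  exact ⟨n, Finset.le_sup (f := id) hn, hx⟩

section

variable {T A : Type*} (f : (T → A) → (T → A))

def dependencySet (t' : T) : Set T :=
  {t | ∃ x y : T → A, (∀ u, u ≠ t → x u = y u) ∧ f x t' ≠ f y t'}

def backwardCone : ℕ → T → Set T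
  | 0, t => {t}
  | n + 1, t => ⋃ v ∈ dependencySet f t, backwardCone n v

variable {f}

lemma apply_eq_of_eq_off_finset {t' : T} (F : Finset T) (hF : ∀ u ∈ F, u ∉ dependencySet f t')
    {x y : T → A} (hxy : ∀ u ∉ F, x u = y u) : f x t' = f y t' := by
  classical
  induction F using Finset.induction_on generalizing x with
  | empty => rw [funext fun u => hxy u (Finset.notMem_empty u)]
  | insert a F ha ih =>
    have hupdate : f (update x a (y a)) t' = f y t' := by
      refine ih (fun u hu => hF u (Finset.mem_insert_of_mem hu)) fun u hu => ?_
      by_cases hua : u = a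
      · subst hua; simp
      · simp [hua, hxy u (by simp [hua, hu])]
    rw [← hupdate]
    by_contra hne
    exact hF a (Finset.mem_insert_self a F)
      ⟨x, update x a (y a), fun u hu => (update_of_ne hu _ _).symm, hne⟩

lemma apply_eq_of_eqOn_dependencySet [TopologicalSpace A] [DiscreteTopology A] (hf : Continuous f)
    {t' : T} {x y : T → A} (hxy : ∀ u ∈ dependencySet f t', x u = y u) : f x t' = f y t' := by
  classical
  obtain ⟨I, hI⟩ := exists_finset_forall_eq_mem
    ((isOpen_discrete {f y t'}).preimage ((continuous_apply t').comp hf)) rfl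
  have hglued : f (I.piecewise y x) t' = f y t' :=
    hI _ fun u hu => Finset.piecewise_eq_of_mem _ _ _ hu
  rw [← hglued]
  refine apply_eq_of_eq_off_finset (I.filter (· ∉ dependencySet f t'))
    (fun u hu => (Finset.mem_filter.1 hu).2) fun u hu => ?_
  by_cases huI : u ∈ I
  · rw [Finset.piecewise_eq_of_mem _ _ _ huI]
    exact hxy u (by simpa [huI] using hu)
  · rw [Finset.piecewise_eq_of_notMem _ _ _ huI]

lemma iterate_apply_eq_of_eqOn_backwardCone [TopologicalSpace A] [DiscreteTopology A]
    (hf : Continuous f) : ∀ (n : ℕ) {t' : T} {x y : T → A},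
      (∀ u ∈ backwardCone f n t', x u = y u) → f^[n] x t' = f^[n] y t'
  | 0, _, _, _, h => h _ rfl
  | n + 1, _, _, _, h => by
    rw [iterate_succ_apply', iterate_succ_apply']
    exact apply_eq_of_eqOn_dependencySet hf fun v hv =>
      iterate_apply_eq_of_eqOn_backwardCone hf n fun u hu => h u (mem_biUnion hv hu)

lemma backwardCone_finite (h : ∀ t', (dependencySet f t').Finite) :
    ∀ n (t : T), (backwardCone f n t).Finite
  | 0, t => finite_singleton t
  | n + 1, t => (h t).biUnion fun v _ => backwardCone_finite h n v

lemma finite_setOf_exists_mem_backwardCone (h : ∀ t, {t' | t ∈ dependencySet f t'}.Finite)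
    {C : Set T} (hC : C.Finite) : ∀ n, {t' | ∃ c ∈ C, c ∈ backwardCone f n t'}.Finite
  | 0 => by simpa [backwardCone] using hC
  | n + 1 => by
    refine ((finite_setOf_exists_mem_backwardCone h hC n).biUnion fun v _ => h v).subset ?_
    rintro t' ⟨c, hc, hct'⟩
    obtain ⟨v, hv, hcv⟩ := mem_iUnion₂.1 hct'
    exact mem_biUnion ⟨c, hc, hcv⟩ hv

lemma iterate_piecewise_eq [TopologicalSpace A] [DiscreteTopology A] (hf : Continuous f)
    {n : ℕ} {z : A} {C : Set T} [DecidablePred (· ∈ C)] {y y' : T → A}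
    (hyC : ∀ t ∉ C, y t = z) (hy : f^[n] y = fun _ => z) (hz : f^[n] (fun _ => z) = fun _ => z)
    (hy' : ∀ t', (∃ c ∈ C, c ∈ backwardCone f n t') → ∀ u ∈ backwardCone f n t', y' u = z) :
    f^[n] (C.piecewise y y') = f^[n] y' := by
  funext t'
  by_cases hmeet : ∃ c ∈ C, c ∈ backwardCone f n t'
  · calc f^[n] (C.piecewise y y') t' = f^[n] y t' := by
          refine iterate_apply_eq_of_eqOn_backwardCone hf n fun u hu => ?_
          by_cases huC : u ∈ C
          · simp [huC]
          · simp [huC, hyC u huC, hy' t' hmeet u hu]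
      _ = f^[n] (fun _ => z) t' := by rw [hy, hz]
      _ = f^[n] y' t' :=
          iterate_apply_eq_of_eqOn_backwardCone hf n fun u hu => (hy' t' hmeet u hu).symm
  · exact iterate_apply_eq_of_eqOn_backwardCone hf n fun u hu =>
      piecewise_eq_of_notMem _ _ _ fun huC => hmeet ⟨u, huC, hu⟩

theorem exists_forall_ge_iterate_apply_eq [Finite A] [TopologicalSpace A] [DiscreteTopology A]
    (hf : Continuous f) {z : A} (hfix : f (fun _ => z) = fun _ => z)
    (hnice₁ : ∀ t', (dependencySet f t').Finite)
    (hnice₂ : ∀ t, {t' | t ∈ dependencySet f t'}.Finite)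
    (hnil : ∀ x, Tendsto (fun n => f^[n] x) atTop (𝓝 fun _ => z))
    (hdense : Dense {x : T → A | {t | x t ≠ z}.Finite ∧ ∃ n, f^[n] x = fun _ => z}) (t₀ : T) :
    ∃ n, ∀ m ≥ n, ∀ x, f^[m] x t₀ = z := by
  classical
  have : Nonempty (T → A) := ⟨fun _ => z⟩
  have hcoord : ∀ x, ∀ᶠ m in atTop, f^[m] x t₀ = z := fun x =>
    tendsto_pure.1 (by simpa [nhds_discrete] using tendsto_pi_nhds.1 (hnil x) t₀)
  obtain ⟨N, y₀, hy₀⟩ := exists_nonempty_interior_of_eventually_eq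
    (fun m => (continuous_apply t₀).comp (hf.iterate m)) hcoord
  obtain ⟨y, ⟨hyfin, δ, hyδ⟩, hyU⟩ := hdense.exists_mem_open isOpen_interior ⟨y₀, hy₀⟩
  obtain ⟨I, hI⟩ := exists_finset_forall_eq_mem isOpen_interior hyU
  set C : Set T := ↑I ∪ {t | y t ≠ z}
  set E : Set T := ⋃ t' ∈ {t' | ∃ c ∈ C, c ∈ backwardCone f δ t'}, backwardCone f δ t'
  have hE : E.Finite := (finite_setOf_exists_mem_backwardCone hnice₂
    (I.finite_toSet.union hyfin) δ).biUnion fun t' _ => backwardCone_finite hnice₁ δ t'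
  have hEdead : ∀ y', (∀ t ∈ E, y' t = z) → ∀ m ≥ N + δ, f^[m] y' t₀ = z := by
    intro y' hy' m hm
    have hglue := iterate_piecewise_eq hf (C := C) (y' := y')
      (fun t ht => not_not.1 fun h => ht (Or.inr h)) hyδ (iterate_fixed hfix δ)
      fun t' ht' u hu => hy' u (mem_biUnion ht' hu)
    obtain ⟨k, rfl⟩ : ∃ k, m = k + δ := ⟨m - δ, by omega⟩
    rw [iterate_add_apply, ← hglue, ← iterate_add_apply]
    exact interior_subset (hI _ fun u hu => piecewise_eq_of_mem C _ _ (Or.inl hu)) _ (by omega)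
  have hEopen : IsOpen (E.pi fun _ => {z}) := isOpen_set_pi hE fun _ _ => isOpen_discrete _
  obtain ⟨J, hJ⟩ := exists_forall_exists_le_iterate_mem hf hEopen fun x =>
    ((hnil x).eventually (hEopen.mem_nhds fun _ _ => rfl)).exists
  refine ⟨J + N + δ, fun m hm x => ?_⟩
  obtain ⟨j, hj, hxj⟩ := hJ x
  obtain ⟨k, rfl⟩ : ∃ k, m = k + j := ⟨m - j, by omega⟩
  rw [iterate_add_apply]
  exact hEdead _ hxj k (by omega)

lemma apply_const_apply_eq {G : Type*} [Group G] [MulAction G T]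
    (htrans : ∀ t t' : T, ∃ g : G, g • t = t')
    (hcomm : ∀ (g : G) (x : T → A), f (fun t => x (g⁻¹ • t)) = fun t => f x (g⁻¹ • t))
    (a : A) (s t : T) : f (fun _ => a) s = f (fun _ => a) t := by
  obtain ⟨g, rfl⟩ := htrans t s
  simpa using congrFun (hcomm g fun _ => a) (g • t)

lemma apply_const_eq_const {G : Type*} [Group G] [MulAction G T] [TopologicalSpace A]
    [DiscreteTopology A] (htrans : ∀ t t' : T, ∃ g : G, g • t = t')
    (hcomm : ∀ (g : G) (x : T → A), f (fun t => x (g⁻¹ • t)) = fun t => f x (g⁻¹ • t))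
    {z : A} (hnil : Tendsto (fun n => f^[n] fun _ => z) atTop (𝓝 fun _ => z)) :
    f (fun _ => z) = fun _ => z := by
  rcases isEmpty_or_nonempty T with hT | ⟨⟨t₀⟩⟩
  · exact funext isEmptyElim
  set φ : A → A := fun a => f (fun _ => a) t₀
  have hsemi : Semiconj (fun a _ => a) φ f := fun a =>
    funext fun t => apply_const_apply_eq htrans hcomm a t₀ t
  have hφ : ∀ᶠ n in atTop, φ^[n] z = z := by
    refine tendsto_pure.1 ?_
    simpa [nhds_discrete, ← (hsemi.iterate_right _).eq] using tendsto_pi_nhds.1 hnil t₀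
  obtain ⟨n, hn⟩ := eventually_atTop.1 hφ
  have hφz : φ z = z := calc
    φ z = φ (φ^[n] z) := by rw [hn n le_rfl]
    _ = φ^[n + 1] z := (iterate_succ_apply' φ n z).symm
    _ = z := hn _ n.le_succ
  exact (hsemi z).symm.trans (congrArg (fun a (_ : T) => a) hφz)

end

theorem uniformly_asymptotically_nilpotent_of_dense_finite_mortal_general
    {G T A : Type*} [Group G] [MulAction G T] [Finite A]
    [TopologicalSpace A] [DiscreteTopology A]
    (htrans : ∀ t t' : T, ∃ g : G, g • t = t')
    (z : A) (f : (T → A) → (T → A)) (hf : Continuous f)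
    (hcomm : ∀ (g : G) (x : T → A),
      f (fun t => x (g⁻¹ • t)) = fun t => f x (g⁻¹ • t))
    (hnice₁ : ∀ t' : T,
      {t : T | ∃ x y : T → A, (∀ u, u ≠ t → x u = y u) ∧ f x t' ≠ f y t'}.Finite)
    (hnice₂ : ∀ t : T,
      {t' : T | ∃ x y : T → A, (∀ u, u ≠ t → x u = y u) ∧ f x t' ≠ f y t'}.Finite)
    (hnil : ∀ x : T → A,
      Tendsto (fun n => f^[n] x) atTop (nhds (fun _ => z)))
    (hdense : Dense {x : T → A |
      {t : T | x t ≠ z}.Finite ∧ ∃ n : ℕ, f^[n] x = fun _ => z}) :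
    ∀ B : Finset T, ∃ n : ℕ, ∀ m ≥ n, ∀ x : T → A, ∀ t ∈ B, f^[m] x t = z := by
  intro B
  choose n hn using exists_forall_ge_iterate_apply_eq hf
    (apply_const_eq_const htrans hcomm (hnil _)) hnice₁ hnice₂ hnil hdense
  exact ⟨B.sup n, fun m hm x t ht => hn t m ((Finset.le_sup ht).trans hm) x⟩

/-- A cellular automaton with nice local rules on a transitive
group action on a countable set, which is asymptotically nilpotent and for
which the finite mortal configurations are dense, is uniformly asymptotically
nilpotent. -/
theorem uniformly_asymptotically_nilpotent_of_dense_finite_mortal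
    {G T A : Type*} [Group G] [MulAction G T] [Countable T] [Finite A]
    [TopologicalSpace A] [DiscreteTopology A]
    (htrans : ∀ t t' : T, ∃ g : G, g • t = t')
    (z : A) (f : (T → A) → (T → A)) (hf : Continuous f)
    (hcomm : ∀ (g : G) (x : T → A),
      f (fun t => x (g⁻¹ • t)) = fun t => f x (g⁻¹ • t))
    (hnice₁ : ∀ t' : T,
      {t : T | ∃ x y : T → A, (∀ u, u ≠ t → x u = y u) ∧ f x t' ≠ f y t'}.Finite)
    (hnice₂ : ∀ t : T,
      {t' : T | ∃ x y : T → A, (∀ u, u ≠ t → x u = y u) ∧ f x t' ≠ f y t'}.Finite)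
    (hnil : ∀ x : T → A,
      Tendsto (fun n => f^[n] x) atTop (nhds (fun _ => z)))
    (hdense : Dense {x : T → A |
      {t : T | x t ≠ z}.Finite ∧ ∃ n : ℕ, f^[n] x = fun _ => z}) :
    ∀ B : Finset T, ∃ n : ℕ, ∀ m ≥ n, ∀ x : T → A, ∀ t ∈ B, f^[m] x t = z :=
  uniformly_asymptotically_nilpotent_of_dense_finite_mortal_general htrans z f hf hcomm hnice₁
    hnice₂ hnil hdense
end

section
/- Let G be a group acting transitively on a countable set T, let A be a finite alphabet with distinguished symbol 0, and let f : A^T → A^T be a cellular automaton on G ↷ T with nice local rules. Suppose f is asymptotically nilpotent toward 0^T and every finite configuration x has uniformly bounded support under iteration: there exists a finite set S ⊆ T with supp(f^n(x)) ⊆ S for all n ∈ ℕ. Then f is uniformly asymptotically nilpotent. -/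
/-!
The orbit of a finite configuration stays in a finite set, so asymptotic nilpotency makes it
die completely after finitely many steps. Suppose a cell `t₀` is alive at arbitrarily late
times. By Baire's theorem one of the closed sets `{x | ∀ n ≥ N, f^[n] x t₀ = z}` contains a
cylinder, fixed on a finite set `P`; the restriction `y` of its centre to `P` is finite, hence
dies at some time `τ`. Compactness provides a configuration `w` whose orbit avoids `P` and every
cell interacting with the orbit of `y` up to time `τ`, while `t₀` is alive under `w` at some time
`l ≥ max N τ`. Overlaying `y` and `w` gives a point of the cylinder whose two pieces evolve
independently until `y` dies, after which the orbit is that of `w`; so `t₀` is alive at time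
`l`, a contradiction.
-/

open Filter Set Function Topology

namespace CellularAutomaton

variable {T A : Type*}

section Neighborhoods

variable (f : (T → A) → (T → A))

def deps (t' : T) : Set T :=
  {t | ∃ x y : T → A, (∀ u, u ≠ t → x u = y u) ∧ f x t' ≠ f y t'}

def nbhd (t' : T) : Set T := insert t' (deps f t')

def nbhdSet (S : Set T) : Set T := ⋃ t ∈ S, nbhd f t

/-- `window f n {t}` contains every cell on which `f^[n] · t` can depend. -/
def window (n : ℕ) (S : Set T) : Set T := (nbhdSet f)^[n] S

def readers (S : Set T) : Set T := {t' | ∃ u ∈ S, u ∈ nbhd f t'}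

variable {f}

lemma subset_nbhdSet (S : Set T) : S ⊆ nbhdSet f S :=
  fun t ht => mem_biUnion ht (mem_insert t _)

lemma nbhdSet_mono : Monotone (nbhdSet f) :=
  fun _ _ h => biUnion_subset_biUnion_left h

lemma window_succ (n : ℕ) (S : Set T) : window f (n + 1) S = nbhdSet f (window f n S) :=
  iterate_succ_apply' _ _ _

lemma window_mono_left (S : Set T) : Monotone fun n => window f n S :=
  monotone_nat_of_le_succ fun n => by
    simp only [window_succ]
    exact subset_nbhdSet _

lemma window_mono_right (n : ℕ) : Monotone (window f n) :=
  nbhdSet_mono.iterate n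

lemma window_mono {m n : ℕ} {S S' : Set T} (hmn : m ≤ n) (hS : S ⊆ S') :
    window f m S ⊆ window f n S' :=
  (window_mono_left S hmn).trans (window_mono_right n hS)

lemma nbhdSet_finite (hdeps : ∀ t', (deps f t').Finite) {S : Set T} (hS : S.Finite) :
    (nbhdSet f S).Finite :=
  hS.biUnion fun t _ => (hdeps t).insert t

lemma window_finite (hdeps : ∀ t', (deps f t').Finite) (n : ℕ) {S : Set T} (hS : S.Finite) :
    (window f n S).Finite := by
  induction n with
  | zero => exact hS
  | succ n ih => rw [window_succ]; exact nbhdSet_finite hdeps ih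

lemma readers_finite (hreaders : ∀ t, {t' | t ∈ deps f t'}.Finite) {S : Set T}
    (hS : S.Finite) : (readers f S).Finite := by
  refine (hS.biUnion fun u _ => (hreaders u).insert u).subset ?_
  rintro t' ⟨u, hu, rfl | hdep⟩
  · exact mem_biUnion hu (mem_insert _ _)
  · exact mem_biUnion hu (mem_insert_of_mem _ hdep)

lemma nbhd_subset_nbhdSet_readers {S : Set T} {t' : T} (ht' : t' ∈ readers f S) :
    nbhd f t' ⊆ nbhdSet f (readers f S) :=
  subset_biUnion_of_mem ht'

lemma apply_eq_of_eq_off_finset {t' : T} (K : Finset T) (hK : ∀ u ∈ K, u ∉ deps f t')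
    {x y : T → A} (hxy : ∀ u ∉ K, x u = y u) : f x t' = f y t' := by
  classical
  induction K using Finset.induction_on generalizing x with
  | empty => exact congrArg (f · t') (funext fun u => hxy u (Finset.notMem_empty u))
  | insert a K _ ih =>
    have hK' : ∀ u ∈ K, u ∉ deps f t' := fun u hu => hK u (Finset.mem_insert_of_mem hu)
    calc f x t' = f (update x a (y a)) t' := by
          by_contra hne
          exact hK a (Finset.mem_insert_self a K)
            ⟨x, _, fun u hu => (update_of_ne hu _ _).symm, hne⟩
      _ = f y t' := ih hK' fun u hu => by
          rcases eq_or_ne u a with rfl | hua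
          · exact update_self _ _ _
          · rw [update_of_ne hua]
            exact hxy u (by simp [hua, hu])

end Neighborhoods

section Topology

variable [TopologicalSpace A]

lemma exists_finset_forall_eq_imp_mem {U : Set (T → A)} {x : T → A} (hU : U ∈ 𝓝 x) :
    ∃ I : Finset T, ∀ y : T → A, (∀ u ∈ I, y u = x u) → y ∈ U := by
  obtain ⟨I, s, hs, hsU⟩ := Filter.mem_pi'.mp (nhds_pi (a := x) ▸ hU)
  exact ⟨I, fun y hy => hsU fun u hu => hy u hu ▸ mem_of_mem_nhds (hs u)⟩

variable [DiscreteTopology A]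

lemma setOf_forall_eq_mem_nhds {I : Set T} (hI : I.Finite) (x : T → A) :
    {y : T → A | ∀ u ∈ I, y u = x u} ∈ 𝓝 x :=
  set_pi_mem_nhds (s := fun u => {x u}) hI fun _ _ => isOpen_discrete _ |>.mem_nhds rfl

variable {f : (T → A) → (T → A)}

lemma apply_eq_of_eqOn_nbhd (hf : Continuous f) {x y : T → A} {t' : T}
    (hxy : ∀ u ∈ nbhd f t', x u = y u) : f x t' = f y t' := by
  classical
  have hopen : {y' | f y' t' = f y t'} ∈ 𝓝 y :=
    ((continuous_apply t').comp hf).isOpen_preimage _ (isOpen_discrete {f y t'}) |>.mem_nhds rfl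
  obtain ⟨K, hK⟩ := exists_finset_forall_eq_imp_mem hopen
  let x' : T → A := fun u => if u ∈ K then y u else x u
  calc f x t' = f x' t' := by
        refine apply_eq_of_eq_off_finset (K.filter fun u => x u ≠ y u) ?_ fun u hu => ?_
        · intro u hu hdep
          exact (Finset.mem_filter.mp hu).2 (hxy u (mem_insert_of_mem _ hdep))
        · by_cases huK : u ∈ K
          · simp only [x', if_pos huK]
            by_contra hne
            exact hu (Finset.mem_filter.mpr ⟨huK, hne⟩)
          · simp only [x', if_neg huK]
    _ = f y t' := hK x' fun u hu => if_pos hu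

lemma iterate_apply_eq_of_eqOn_window (hf : Continuous f) (n : ℕ) {x y : T → A} {t' : T}
    (hxy : ∀ u ∈ window f n {t'}, x u = y u) : f^[n] x t' = f^[n] y t' := by
  induction n generalizing x y with
  | zero => exact hxy t' rfl
  | succ n ih =>
    simp only [iterate_succ_apply]
    refine ih fun u hu => apply_eq_of_eqOn_nbhd hf fun v hv => hxy v ?_
    rw [window_succ]
    exact mem_biUnion hu hv

end Topology

section Overlay

variable [DecidableEq A]

def overlay (z : A) (y w : T → A) : T → A :=
  fun t => if y t = z then w t else y t

variable {z : A}

lemma overlay_of_eq_left {y w : T → A} {t : T} (h : y t = z) : overlay z y w t = w t :=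
  if_pos h

lemma overlay_of_eq_right {y w : T → A} {t : T} (h : w t = z) : overlay z y w t = y t := by
  by_cases hy : y t = z
  · rw [overlay_of_eq_left hy, h, hy]
  · exact if_neg hy

end Overlay

section Nilpotency

variable [TopologicalSpace A] [DiscreteTopology A] {f : (T → A) → (T → A)} {z : A}

lemma exists_iterate_eq_const {x : T → A}
    (hx : Tendsto (fun n => f^[n] x) atTop (𝓝 fun _ => z)) {S : Set T} (hS : S.Finite)
    (hsupp : ∀ n, {t | f^[n] x t ≠ z} ⊆ S) : ∃ τ, f^[τ] x = fun _ => z := by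
  obtain ⟨τ, hτ⟩ := (hx.eventually_mem (setOf_forall_eq_mem_nhds hS _)).exists
  refine ⟨τ, funext fun t => ?_⟩
  by_contra hne
  exact hne (hτ t (hsupp τ hne))

section

variable [DecidableEq A]

lemma iterate_overlay_eq (hf : Continuous f) {y w : T → A} {S : Set T} {τ : ℕ}
    (hy : ∀ n, {t | f^[n] y t ≠ z} ⊆ S)
    (hw : ∀ k ≤ τ, ∀ t ∈ nbhdSet f (readers f S), f^[k] w t = z) :
    ∀ n ≤ τ, f^[n] (overlay z y w) = overlay z (f^[n] y) (f^[n] w) := by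
  intro n hn
  induction n with
  | zero => rfl
  | succ n ih =>
    funext t'
    rw [iterate_succ_apply' f n, ih (by omega)]
    by_cases ht' : t' ∈ readers f S
    · have hwt : ∀ k ≤ τ, ∀ u ∈ nbhd f t', f^[k] w u = z :=
        fun k hk u hu => hw k hk u (nbhd_subset_nbhdSet_readers ht' hu)
      rw [overlay_of_eq_right (hwt (n + 1) hn t' (mem_insert t' _)), iterate_succ_apply']
      exact apply_eq_of_eqOn_nbhd hf fun u hu => overlay_of_eq_right (hwt n (by omega) u hu)
    · have hyt : ∀ k, ∀ u ∈ nbhd f t', f^[k] y u = z := fun k u hu => by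
        by_contra hne
        exact ht' ⟨u, hy k hne, hu⟩
      rw [overlay_of_eq_left (hyt (n + 1) t' (mem_insert t' _)), iterate_succ_apply']
      exact apply_eq_of_eqOn_nbhd hf fun u hu => overlay_of_eq_left (hyt n u hu)

lemma iterate_overlay_eq_of_le (hf : Continuous f) {y w : T → A} {S : Set T} {τ : ℕ}
    (hy : ∀ n, {t | f^[n] y t ≠ z} ⊆ S) (hyτ : f^[τ] y = fun _ => z)
    (hw : ∀ k ≤ τ, ∀ t ∈ nbhdSet f (readers f S), f^[k] w t = z) {n : ℕ} (hn : τ ≤ n) :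
    f^[n] (overlay z y w) = f^[n] w := by
  obtain ⟨k, rfl⟩ := Nat.exists_eq_add_of_le' hn
  rw [iterate_add_apply, iterate_overlay_eq hf hy hw τ le_rfl, hyτ, iterate_add_apply]
  exact congrArg _ (funext fun t => overlay_of_eq_left rfl)

end

variable [Finite A]

lemma exists_cylinder_subset_eventually_dead (hf : Continuous f)
    (hnil : ∀ x : T → A, Tendsto (fun n => f^[n] x) atTop (𝓝 fun _ => z)) (t₀ : T) :
    ∃ (N : ℕ) (x₀ : T → A) (P : Finset T),
      ∀ x : T → A, (∀ u ∈ P, x u = x₀ u) → ∀ n ≥ N, f^[n] x t₀ = z := by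
  have : Nonempty (T → A) := ⟨fun _ => z⟩
  obtain ⟨N, x₀, hx₀⟩ : ∃ N, (interior {x : T → A | ∀ n ≥ N, f^[n] x t₀ = z}).Nonempty := by
    refine nonempty_interior_of_iUnion_of_closed (fun N => ?_) ?_
    · simp only [ofPred_forall]
      exact isClosed_iInter fun n => isClosed_iInter fun _ =>
        isClosed_eq ((continuous_apply t₀).comp (hf.iterate n)) continuous_const
    · refine eq_univ_of_forall fun x => mem_iUnion.mpr ?_
      exact (eventually_atTop.mp ((hnil x).eventually_mem
        (setOf_forall_eq_mem_nhds (finite_singleton t₀) _))).imp fun N h n hn => h n hn t₀ rfl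
  obtain ⟨P, hP⟩ := exists_finset_forall_eq_imp_mem (isOpen_interior.mem_nhds hx₀)
  exact ⟨N, x₀, P, fun x hx => interior_subset (hP x hx)⟩

/-- `w` is `f^[n₀] v` for a late witness `v` agreeing on a large window with a cluster point of
late witnesses whose orbit vanishes on `F` from time `n₀` on. -/
lemma exists_late_witness (hf : Continuous f) (hdeps : ∀ t', (deps f t').Finite)
    (hnil : ∀ x : T → A, Tendsto (fun n => f^[n] x) atTop (𝓝 fun _ => z)) {t₀ : T}
    (hlive : ∀ m, ∃ x : T → A, f^[m] x t₀ ≠ z) {F : Set T} (hF : F.Finite) (τ N : ℕ) :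
    ∃ w : T → A, (∀ k ≤ τ, ∀ t ∈ F, f^[k] w t = z) ∧ ∃ l ≥ N, f^[l] w t₀ ≠ z := by
  choose v hv using hlive
  obtain ⟨xs, hxs⟩ := exists_clusterPt_of_compactSpace (map v atTop)
  obtain ⟨n₀, hn₀⟩ :=
    eventually_atTop.mp ((hnil xs).eventually_mem (setOf_forall_eq_mem_nhds hF _))
  obtain ⟨m, hm, hvm⟩ := frequently_atTop.mp (mapClusterPt_iff_frequently.mp hxs _
    (setOf_forall_eq_mem_nhds (window_finite hdeps (n₀ + τ) hF) xs)) (N + n₀)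
  refine ⟨f^[n₀] (v m), fun k hk t ht => ?_, m - n₀, by omega, ?_⟩
  · rw [← iterate_add_apply]
    calc f^[k + n₀] (v m) t = f^[k + n₀] xs t :=
          iterate_apply_eq_of_eqOn_window hf _ fun u hu =>
            hvm u (window_mono (by omega) (singleton_subset_iff.mpr ht) hu)
      _ = z := hn₀ (k + n₀) (by omega) t ht
  · rw [← iterate_add_apply, Nat.sub_add_cancel (by omega)]
    exact hv m

lemma eventually_forall_iterate_apply_eq (hf : Continuous f)
    (hdeps : ∀ t', (deps f t').Finite) (hreaders : ∀ t, {t' | t ∈ deps f t'}.Finite)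
    (hnil : ∀ x : T → A, Tendsto (fun n => f^[n] x) atTop (𝓝 fun _ => z))
    (hbdd : ∀ x : T → A, {t | x t ≠ z}.Finite →
      ∃ S : Set T, S.Finite ∧ ∀ n, {t | f^[n] x t ≠ z} ⊆ S)
    (t₀ : T) : ∀ᶠ m in atTop, ∀ x : T → A, f^[m] x t₀ = z := by
  classical
  by_contra hcon
  have hlive : ∀ m, ∃ x : T → A, f^[m] x t₀ ≠ z := by
    intro m
    obtain ⟨m', hm', hdead⟩ := frequently_atTop.mp (not_eventually.mp hcon) m
    obtain ⟨x, hx⟩ := not_forall.mp hdead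
    refine ⟨f^[m' - m] x, ?_⟩
    rwa [← iterate_add_apply, Nat.add_sub_cancel' hm']
  obtain ⟨N, x₀, P, hP⟩ := exists_cylinder_subset_eventually_dead hf hnil t₀
  set y : T → A := fun t => if t ∈ P then x₀ t else z
  obtain ⟨S, hS, hyS⟩ :=
    hbdd y (P.finite_toSet.subset fun t ht => by_contra fun htP => ht (if_neg htP))
  obtain ⟨τ, hτ⟩ := exists_iterate_eq_const (hnil y) hS hyS
  obtain ⟨w, hw, l, hl, hwl⟩ := exists_late_witness hf hdeps hnil hlive
    ((nbhdSet_finite hdeps (readers_finite hreaders hS)).union P.finite_toSet) τ (max N τ)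
  have hdead := hP (overlay z y w) fun u hu => by
    rw [overlay_of_eq_right (w := w) (hw 0 (Nat.zero_le τ) u (Or.inr hu))]
    exact if_pos hu
  refine hwl ?_
  rw [← iterate_overlay_eq_of_le hf hyS hτ (fun k hk t ht => hw k hk t (Or.inl ht))
    (le_of_max_le_right hl)]
  exact hdead l (le_of_max_le_left hl)

end Nilpotency
end CellularAutomaton

theorem uniformly_asymptotically_nilpotent_of_bounded_supports_general
    {T A : Type*} [Finite A]
    [TopologicalSpace A] [DiscreteTopology A]
    (z : A) (f : (T → A) → (T → A)) (hf : Continuous f)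
    (hnice₁ : ∀ t' : T,
      {t : T | ∃ x y : T → A, (∀ u, u ≠ t → x u = y u) ∧ f x t' ≠ f y t'}.Finite)
    (hnice₂ : ∀ t : T,
      {t' : T | ∃ x y : T → A, (∀ u, u ≠ t → x u = y u) ∧ f x t' ≠ f y t'}.Finite)
    (hnil : ∀ x : T → A,
      Tendsto (fun n => f^[n] x) atTop (nhds (fun _ => z)))
    (hbdd : ∀ x : T → A, {t : T | x t ≠ z}.Finite →
      ∃ S : Set T, S.Finite ∧ ∀ n : ℕ, {t : T | f^[n] x t ≠ z} ⊆ S) :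
    ∀ B : Finset T, ∃ n : ℕ, ∀ m ≥ n, ∀ x : T → A, ∀ t ∈ B, f^[m] x t = z := by
  intro B
  have hcells : ∀ᶠ m in atTop, ∀ t ∈ B, ∀ x : T → A, f^[m] x t = z :=
    B.eventually_all.mpr fun t _ =>
      CellularAutomaton.eventually_forall_iterate_apply_eq hf hnice₁ hnice₂ hnil hbdd t
  obtain ⟨n, hn⟩ := eventually_atTop.mp hcells
  exact ⟨n, fun m hm x t ht => hn m hm t ht x⟩

/-- A cellular automaton with nice local rules on a transitive
group action on a countable set, which is asymptotically nilpotent and under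
which the support of every finite configuration stays uniformly bounded, is
uniformly asymptotically nilpotent. -/
theorem uniformly_asymptotically_nilpotent_of_bounded_supports
    {G T A : Type*} [Group G] [MulAction G T] [Countable T] [Finite A]
    [TopologicalSpace A] [DiscreteTopology A]
    (htrans : ∀ t t' : T, ∃ g : G, g • t = t')
    (z : A) (f : (T → A) → (T → A)) (hf : Continuous f)
    (hcomm : ∀ (g : G) (x : T → A),
      f (fun t => x (g⁻¹ • t)) = fun t => f x (g⁻¹ • t))
    (hnice₁ : ∀ t' : T,
      {t : T | ∃ x y : T → A, (∀ u, u ≠ t → x u = y u) ∧ f x t' ≠ f y t'}.Finite)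
    (hnice₂ : ∀ t : T,
      {t' : T | ∃ x y : T → A, (∀ u, u ≠ t → x u = y u) ∧ f x t' ≠ f y t'}.Finite)
    (hnil : ∀ x : T → A,
      Tendsto (fun n => f^[n] x) atTop (nhds (fun _ => z)))
    (hbdd : ∀ x : T → A, {t : T | x t ≠ z}.Finite →
      ∃ S : Set T, S.Finite ∧ ∀ n : ℕ, {t : T | f^[n] x t ≠ z} ⊆ S) :
    ∀ B : Finset T, ∃ n : ℕ, ∀ m ≥ n, ∀ x : T → A, ∀ t ∈ B, f^[m] x t = z :=
  uniformly_asymptotically_nilpotent_of_bounded_supports_general z f hf hnice₁ hnice₂ hnil hbdd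
end

section
/- Let T be a connected acyclic simple graph (a tree) with graph distance d, and let p : ℤ → V be a bi-infinite injective path in T, i.e. p(n) and p(n+1) are adjacent and p(n) ≠ p(n+2) for all n ∈ ℤ. Then for every vertex t, the sequence n ↦ d(p(−n), t) − n is eventually constant; hence the Busemann function b(t) = lim_{n→∞} (d(p(−n), t) − n) is well defined, and b(p(i)) = i for all i ∈ ℤ. -/
/-!
In a tree a walk without backtracking is a path, and a path is the unique geodesic between its
endpoints; hence `d(p a, p b) = b - a`, i.e. `p` is a geodesic line. Along a geodesic ray the
sequence `n ↦ d(p(-n), t) - n` is non-increasing by the triangle inequality and bounded below by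
`-d(p 0, t)`, so as an integer sequence it is eventually constant. For `t = p i` it equals `i` as
soon as `-n ≤ i`.
-/

open Filter

theorem Int.exists_eventually_eq_of_antitone {f : ℕ → ℤ} (hf : Antitone f)
    (hbdd : BddBelow (Set.range f)) : ∃ c : ℤ, ∀ᶠ n in atTop, f n = c := by
  obtain ⟨c, ⟨n₀, rfl⟩, hmin⟩ := Int.exists_least_of_bdd (P := (· ∈ Set.range f))
    (hbdd.imp fun _ hm _ hz => hm hz) ⟨f 0, 0, rfl⟩
  exact ⟨f n₀, eventually_atTop.2 ⟨n₀, fun n hn => le_antisymm (hf hn) (hmin _ ⟨n, rfl⟩)⟩⟩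

namespace SimpleGraph

variable {V : Type*} {G : SimpleGraph V}

theorem IsAcyclic.length_eq_dist_of_isPath (hG : G.IsAcyclic) {u v : V} {W : G.Walk u v}
    (hW : W.IsPath) : W.length = G.dist u v := by
  obtain ⟨q, hq, hq_len⟩ := W.reachable.exists_path_of_dist
  rw [← hq_len, Subtype.mk.inj (hG.subsingleton_path u v |>.elim ⟨W, hW⟩ ⟨q, hq⟩)]

section Nonbacktracking

variable {p : ℤ → V} (hadj : ∀ n, G.Adj (p n) (p (n + 1))) (hinj : ∀ n, p n ≠ p (n + 2))
include hadj hinj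

theorem IsAcyclic.exists_isPath_of_nonbacktracking (hG : G.IsAcyclic) {a b : ℤ}
    (hab : a < b) :
    ∃ W : G.Walk (p a) (p b), W.IsPath ∧ (W.length : ℤ) = b - a ∧ W.penultimate = p (b - 1) := by
  induction b, hab using Int.leInduction with
  | base => exact ⟨(hadj a).toWalk, by simpa using (hadj a).ne, by simp, by simp⟩
  | succ b _ ih =>
    obtain ⟨W, hW, hlen, hpen⟩ := ih
    -- otherwise `p (b + 1)` would be the penultimate vertex `p (b - 1)`
    have hfresh : p (b + 1) ∉ W.support := fun hmem => hinj (b - 1) <| by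
      rw [← hpen, ← hG.eq_penultimate_of_adj_end hW (hadj b) hmem]
      congr 1; ring
    exact ⟨W.concat (hadj b), hW.concat hfresh (hadj b), by simp [hlen]; ring, by simp⟩

theorem IsAcyclic.dist_eq_of_nonbacktracking (hG : G.IsAcyclic) {a b : ℤ} (hab : a ≤ b) :
    (G.dist (p a) (p b) : ℤ) = b - a := by
  obtain rfl | hlt := hab.eq_or_lt
  · simp
  obtain ⟨W, hW, hlen, -⟩ := hG.exists_isPath_of_nonbacktracking hadj hinj hlt
  rw [← hG.length_eq_dist_of_isPath hW, hlen]

end Nonbacktracking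

noncomputable def busemannSeq (G : SimpleGraph V) (p : ℤ → V) (t : V) (n : ℕ) : ℤ :=
  G.dist (p (-(n : ℤ))) t - n

section GeodesicLine

variable {p : ℤ → V} (hgeod : ∀ a b, a ≤ b → (G.dist (p a) (p b) : ℤ) = b - a)
include hgeod

theorem Connected.antitone_busemannSeq (hG : G.Connected) (t : V) :
    Antitone (G.busemannSeq p t) := by
  refine antitone_nat_of_succ_le fun n => ?_
  have hstep := hgeod (-(n + 1 : ℤ)) (-n) (by omega)
  have htri := hG.dist_triangle (u := p (-(n + 1 : ℤ))) (v := p (-n)) (w := t)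
  simp only [busemannSeq]
  push_cast
  omega

theorem Connected.neg_dist_le_busemannSeq (hG : G.Connected) (t : V) (n : ℕ) :
    -(G.dist (p 0) t : ℤ) ≤ G.busemannSeq p t n := by
  have hray := hgeod (-n) 0 (by omega)
  have htri := hG.dist_triangle (u := p (-n)) (v := t) (w := p 0)
  rw [dist_comm (u := t)] at htri
  simp only [busemannSeq]
  omega

theorem busemannSeq_eventually_eq_index (i : ℤ) :
    ∀ᶠ n in atTop, G.busemannSeq p (p i) n = i := by
  filter_upwards [eventually_ge_atTop (-i).toNat] with n hn
  rw [busemannSeq, hgeod _ _ (by omega)]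
  ring

end GeodesicLine

end SimpleGraph

/-- For a bi-infinite injective path `p` in a tree, the
sequence `n ↦ d(p(-n), t) - n` is eventually constant for every vertex `t`, so
the Busemann function `b` is well defined; moreover `b (p i) = i`. -/
theorem busemann_function_well_defined
    {V : Type*} (T : SimpleGraph V) (hconn : T.Connected) (hacyc : T.IsAcyclic)
    (p : ℤ → V)
    (hadj : ∀ n : ℤ, T.Adj (p n) (p (n + 1)))
    (hinj : ∀ n : ℤ, p n ≠ p (n + 2)) :
    ∃ b : V → ℤ,
      (∀ t : V, ∀ᶠ n : ℕ in atTop, (T.dist (p (-(n : ℤ))) t : ℤ) - (n : ℤ) = b t) ∧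
      ∀ i : ℤ, b (p i) = i := by
  have hgeod := fun a b (hab : a ≤ b) => hacyc.dist_eq_of_nonbacktracking hadj hinj hab
  choose b hb using fun t => Int.exists_eventually_eq_of_antitone
    (hconn.antitone_busemannSeq hgeod t)
    ⟨_, Set.forall_mem_range.2 (hconn.neg_dist_le_busemannSeq hgeod t)⟩
  refine ⟨b, hb, fun i => ?_⟩
  obtain ⟨n, hn, hni⟩ :=
    ((hb (p i)).and (SimpleGraph.busemannSeq_eventually_eq_index hgeod i)).exists
  rw [← hn, hni]
end

section
/- Let k ≥ 2, let T be the k-regular tree with vertex set V and graph distance d, let p : ℤ → V be a bi-infinite injective path, and let b : V → ℤ be its Busemann function, b(t) = lim_{n→∞} (d(p(−n), t) − n). Let A be a finite alphabet and let Y = {y ∈ A^V : ∀ t, t' ∈ V, b(t) = b(t') → y_t = y_{t'}} be the set of configurations constant on Busemann levels. Then every cellular automaton f : A^V → A^V on Aut(T) ↷ V satisfies f(Y) ⊆ Y. -/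
/-!
Let `x = p (-N)` with `N` so large that `b t = d(x, t) - N` and `b t' = d(x, t') - N`; then `t` and
`t'` are at the same distance from `x`. Building an automorphism outwards from `x`, sending the
children of each vertex bijectively onto the children of its image (possible since all degrees are
equal), and steering the geodesic from `x` to `t'` onto the one from `x` to `t`, gives `e` with
`e t' = t` that fixes every vertex whose geodesics to `t` and `t'` pass through `x`, in particular
the ray `p (-n)`, `n ≥ N`. Such an `e` preserves `b`, so it fixes every `y ∈ Y`, and equivariance
gives `f y t = f y (e t') = f (y ∘ e) t' = f y t'`.
-/

open Filter Set

namespace SimpleGraph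

variable {V : Type*} (T : SimpleGraph V)

open scoped Classical in
/-- The neighbour of `v` one step closer to the root `x` (junk value `x` at the root). -/
noncomputable def parent (x v : V) : V :=
  if h : ∃ u, T.Adj u v ∧ T.dist x u + 1 = T.dist x v then h.choose else x

def children (x w : V) : Set V := {v | T.Adj w v ∧ T.dist x v = T.dist x w + 1}

/-- The vertex at distance `i` from `x` on the geodesic from `x` to `v`, for `i ≤ dist x v`. -/
noncomputable def ancestor (x v : V) (i : ℕ) : V := (T.parent x)^[T.dist x v - i] v

variable {T} {x : V}

lemma Connected.exists_adj_dist_add_one (hconn : T.Connected) {v : V} (hv : v ≠ x) :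
    ∃ u, T.Adj u v ∧ T.dist x u + 1 = T.dist x v := by
  obtain ⟨P, hP⟩ := hconn.exists_walk_length_eq_dist v x
  have hnil : ¬P.Nil := fun h => hv (Walk.Nil.eq h)
  refine ⟨P.snd, (Walk.adj_snd hnil).symm, le_antisymm ?_ ?_⟩
  · calc T.dist x P.snd + 1 = T.dist P.snd x + 1 := by rw [dist_comm]
      _ ≤ P.tail.length + 1 := by gcongr; exact dist_le _
      _ = T.dist x v := by rw [Walk.length_tail_add_one hnil, hP, dist_comm]
  · calc T.dist x v ≤ T.dist x P.snd + T.dist P.snd v := hconn.dist_triangle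
      _ = T.dist x P.snd + 1 := by rw [dist_eq_one_iff_adj.mpr (Walk.adj_snd hnil).symm]

lemma Connected.parent_spec (hconn : T.Connected) {v : V} (hv : v ≠ x) :
    T.Adj (T.parent x v) v ∧ T.dist x (T.parent x v) + 1 = T.dist x v := by
  have h := hconn.exists_adj_dist_add_one hv
  rw [parent, dif_pos h]
  exact h.choose_spec

lemma IsTree.eq_parent_of_adj (hT : T.IsTree) {u v : V} (hadj : T.Adj u v)
    (hd : T.dist x u + 1 = T.dist x v) : u = T.parent x v := by
  have hv : v ≠ x := by rintro rfl; simp at hd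
  obtain ⟨P, hP, -⟩ := hT.connected.exists_path_of_dist x v
  have penultimate_eq {w : V} (hw : T.Adj w v) (hwd : T.dist x w + 1 = T.dist x v) :
      w = P.penultimate := by
    obtain ⟨Q, hQ, hQlen⟩ := hT.connected.exists_path_of_dist x w
    have hvQ : v ∉ Q.support := fun hmem => by
      classical
      have := Q.length_takeUntil_le_length hmem
      have := dist_le (Q.takeUntil v hmem)
      omega
    exact hT.isAcyclic.eq_penultimate_of_adj_end hP hw.symm
      (hT.isAcyclic.mem_support_of_ne_mem_support_of_adj_of_isPath hP hQ hw.symm hvQ)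
  have hpar := hT.connected.parent_spec hv
  rw [penultimate_eq hadj hd, penultimate_eq hpar.1 hpar.2]

lemma IsTree.mem_children_iff (hT : T.IsTree) {w v : V} :
    v ∈ T.children x w ↔ T.parent x v = w ∧ v ≠ x := by
  constructor
  · rintro ⟨hadj, hd⟩
    have hv : v ≠ x := by rintro rfl; simp at hd
    exact ⟨(hT.eq_parent_of_adj hadj hd.symm).symm, hv⟩
  · rintro ⟨rfl, hv⟩
    have hpar := hT.connected.parent_spec hv
    exact ⟨hpar.1, hpar.2.symm⟩

lemma IsTree.children_eq_diff (hT : T.IsTree) {w : V} (hw : w ≠ x) :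
    T.children x w = T.neighborSet w \ {T.parent x w} := by
  have hpar := hT.connected.parent_spec hw
  ext v
  simp only [children, mem_ofPred_eq, Set.mem_sdiff, mem_neighborSet, mem_singleton_iff]
  refine ⟨fun ⟨hadj, hd⟩ => ⟨hadj, by rintro rfl; omega⟩, fun ⟨hadj, hv⟩ => ⟨hadj, ?_⟩⟩
  rcases hT.dist_eq_dist_add_one_of_adj x hadj with h | h
  · exact absurd (hT.eq_parent_of_adj hadj.symm h.symm) hv
  · exact h

lemma IsTree.ncard_children (hT : T.IsTree) {k : ℕ} (hreg : ∀ v, Nat.card (T.neighborSet v) = k)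
    {w : V} (hw : w ≠ x) : (T.children x w).ncard = k - 1 := by
  rw [hT.children_eq_diff hw, ncard_sdiff_singleton_of_mem
    (show T.parent x w ∈ T.neighborSet w from (hT.connected.parent_spec hw).1.symm),
    ← Nat.card_coe_set_eq, hreg]

lemma IsTree.exists_bijOn_children (hT : T.IsTree) {k : ℕ}
    (hreg : ∀ v, Nat.card (T.neighborSet v) = k) (hk : k ≠ 0) {w w' : V}
    (hd : T.dist x w = T.dist x w') :
    ∃ g : V → V, BijOn g (T.children x w) (T.children x w') := by
  have hfin (u : V) : (T.children x u).Finite :=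
    have : Finite (T.neighborSet u) := Nat.finite_of_card_ne_zero (by rw [hreg]; exact hk)
    (toFinite (T.neighborSet u)).subset fun _ hv => hv.1
  have hroot {u : V} : u = x ↔ T.dist x u = 0 := by
    rw [hT.connected.dist_eq_zero_iff, eq_comm]
  have hcard : (T.children x w).ncard = (T.children x w').ncard := by
    by_cases hw : w = x
    · rw [hw, (hroot.mpr (hd ▸ hroot.mp hw) : w' = x)]
    · rw [hT.ncard_children hreg hw,
        hT.ncard_children hreg (fun hw' => hw (hroot.mpr (hd ▸ hroot.mp hw')))]
  have : Nonempty V := ⟨x⟩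
  exact (hfin w).exists_bijOn_of_encard_eq
    (by rw [← (hfin w).cast_ncard_eq, ← (hfin w').cast_ncard_eq, hcard])

lemma Connected.dist_parent_iterate (hconn : T.Connected) {m : ℕ} {v : V}
    (hm : m ≤ T.dist x v) : T.dist x ((T.parent x)^[m] v) = T.dist x v - m := by
  induction m generalizing v with
  | zero => rfl
  | succ m ih =>
    have hv : v ≠ x := by rintro rfl; simp at hm
    have hpar := hconn.parent_spec hv
    rw [Function.iterate_succ_apply, ih (by omega)]
    omega

lemma Connected.dist_parent_le (hconn : T.Connected) (v : V) : T.dist (T.parent x v) v ≤ 1 := by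
  by_cases hv : v = x
  · simp [parent, hv]
  · exact (dist_eq_one_iff_adj.mpr (hconn.parent_spec hv).1).le

lemma Connected.dist_parent_iterate_le (hconn : T.Connected) (m : ℕ) (v : V) :
    T.dist ((T.parent x)^[m] v) v ≤ m := by
  induction m generalizing v with
  | zero => simp
  | succ m ih =>
    rw [Function.iterate_succ_apply]
    calc T.dist ((T.parent x)^[m] (T.parent x v)) v
        ≤ T.dist ((T.parent x)^[m] (T.parent x v)) (T.parent x v) + T.dist (T.parent x v) v :=
          hconn.dist_triangle
      _ ≤ m + 1 := add_le_add (ih _) (hconn.dist_parent_le v)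

lemma Connected.dist_ancestor (hconn : T.Connected) {v : V} {i : ℕ} (hi : i ≤ T.dist x v) :
    T.dist x (T.ancestor x v i) = i := by
  rw [ancestor, hconn.dist_parent_iterate (by omega)]
  omega

lemma ancestor_dist (v : V) : T.ancestor x v (T.dist x v) = v := by
  simp [ancestor]

lemma Connected.ancestor_zero (hconn : T.Connected) (v : V) : T.ancestor x v 0 = x := by
  rw [eq_comm, ← hconn.dist_eq_zero_iff, hconn.dist_ancestor (Nat.zero_le _)]

lemma parent_ancestor_succ {v : V} {i : ℕ} (hi : i + 1 ≤ T.dist x v) :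
    T.parent x (T.ancestor x v (i + 1)) = T.ancestor x v i := by
  rw [ancestor, ancestor, ← Function.iterate_succ_apply' (T.parent x)]
  congr 1
  omega

lemma Connected.ancestor_ancestor (hconn : T.Connected) {v : V} {i j : ℕ} (hij : i ≤ j)
    (hj : j ≤ T.dist x v) : T.ancestor x (T.ancestor x v j) i = T.ancestor x v i := by
  rw [ancestor, hconn.dist_ancestor hj, ancestor, ancestor, ← Function.iterate_add_apply]
  congr 1
  omega

lemma Connected.ancestor_succ_mem_children (hconn : T.Connected) {v : V} {i : ℕ}
    (hi : i + 1 ≤ T.dist x v) :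
    T.ancestor x v (i + 1) ∈ T.children x (T.ancestor x v i) := by
  have hne : T.ancestor x v (i + 1) ≠ x := by
    rw [ne_eq, eq_comm, ← hconn.dist_eq_zero_iff, hconn.dist_ancestor hi]
    omega
  have hpar := hconn.parent_spec hne
  rw [parent_ancestor_succ hi] at hpar
  exact ⟨hpar.1, hpar.2.symm⟩

lemma Connected.dist_ancestor_le (hconn : T.Connected) (v : V) (i : ℕ) :
    T.dist (T.ancestor x v i) v ≤ T.dist x v - i :=
  hconn.dist_parent_iterate_le _ v

lemma Connected.ancestor_one_ne_of_dist_eq_add (hconn : T.Connected) {v t : V}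
    (h : T.dist v t = T.dist v x + T.dist x t) (hv : 1 ≤ T.dist x v) (ht : 1 ≤ T.dist x t) :
    T.ancestor x v 1 ≠ T.ancestor x t 1 := by
  intro heq
  have hvt : T.dist v t ≤ T.dist (T.ancestor x v 1) v + T.dist (T.ancestor x t 1) t := by
    rw [dist_comm (u := T.ancestor x v 1), heq]
    exact hconn.dist_triangle
  have := hconn.dist_ancestor_le (x := x) v 1
  have := hconn.dist_ancestor_le (x := x) t 1
  have : T.dist v x = T.dist x v := dist_comm
  omega

lemma IsTree.adj_iff_mem_children (hT : T.IsTree) {u v : V} :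
    T.Adj u v ↔ v ∈ T.children x u ∨ u ∈ T.children x v := by
  refine ⟨fun h => ?_, ?_⟩
  · rcases hT.dist_eq_dist_add_one_of_adj x h with hd | hd
    · exact Or.inr ⟨h.symm, hd⟩
    · exact Or.inl ⟨h, hd⟩
  · rintro (⟨h, -⟩ | ⟨h, -⟩)
    exacts [h, h.symm]

section ChildBijective

variable {φ : V → V} (hT : T.IsTree) (hφ : ∀ w, BijOn φ (T.children x w) (T.children x (φ w)))
include hT hφ

lemma IsTree.parent_apply_of_bijOn_children {v : V} (hv : v ≠ x) :
    T.parent x (φ v) = φ (T.parent x v) ∧ φ v ≠ x :=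
  hT.mem_children_iff.mp ((hφ _).mapsTo (hT.mem_children_iff.mpr ⟨rfl, hv⟩))

lemma IsTree.dist_apply_of_bijOn_children (hφx : φ x = x) (v : V) :
    T.dist x (φ v) = T.dist x v := by
  induction hn : T.dist x v generalizing v with
  | zero => rw [(hT.connected.dist_eq_zero_iff.mp hn).symm, hφx, dist_self]
  | succ n ih =>
    have hv : v ≠ x := by rintro rfl; simp at hn
    have hpar := hT.connected.parent_spec hv
    obtain ⟨hpφ, hφv⟩ := hT.parent_apply_of_bijOn_children hφ hv
    have hpφ' := hT.connected.parent_spec hφv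
    rw [hpφ, ih (T.parent x v) (by omega)] at hpφ'
    omega

lemma IsTree.injective_of_bijOn_children (hφx : φ x = x) : Function.Injective φ := by
  suffices ∀ n v₁ v₂, T.dist x v₁ = n → T.dist x v₂ = n → φ v₁ = φ v₂ → v₁ = v₂ by
    intro v₁ v₂ h
    refine this _ v₁ v₂ rfl ?_ h
    rw [← hT.dist_apply_of_bijOn_children hφ hφx, ← h, hT.dist_apply_of_bijOn_children hφ hφx]
  intro n
  induction n with
  | zero =>
    intro v₁ v₂ h₁ h₂ _
    rw [← hT.connected.dist_eq_zero_iff.mp h₁, hT.connected.dist_eq_zero_iff.mp h₂]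
  | succ n ih =>
    intro v₁ v₂ h₁ h₂ h
    have hv₁ : v₁ ≠ x := by rintro rfl; simp at h₁
    have hv₂ : v₂ ≠ x := by rintro rfl; simp at h₂
    have hpar₁ := hT.connected.parent_spec hv₁
    have hpar₂ := hT.connected.parent_spec hv₂
    have hp : T.parent x v₁ = T.parent x v₂ := by
      refine ih _ _ (by omega) (by omega) ?_
      rw [← (hT.parent_apply_of_bijOn_children hφ hv₁).1, h,
        (hT.parent_apply_of_bijOn_children hφ hv₂).1]
    refine (hφ (T.parent x v₁)).injOn (hT.mem_children_iff.mpr ⟨rfl, hv₁⟩) ?_ h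
    exact hT.mem_children_iff.mpr ⟨hp.symm, hv₂⟩

lemma IsTree.surjective_of_bijOn_children (hφx : φ x = x) : Function.Surjective φ := by
  intro u
  induction hn : T.dist x u generalizing u with
  | zero => exact ⟨x, hφx.trans (hT.connected.dist_eq_zero_iff.mp hn)⟩
  | succ n ih =>
    have hu : u ≠ x := by rintro rfl; simp at hn
    have hpar := hT.connected.parent_spec hu
    obtain ⟨w, hw⟩ := ih (T.parent x u) (by omega)
    obtain ⟨v, -, hv⟩ := (hφ w).surjOn (hT.mem_children_iff.mpr ⟨hw.symm, hu⟩)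
    exact ⟨v, hv⟩

lemma IsTree.exists_iso_of_bijOn_children (hφx : φ x = x) : ∃ e : T ≃g T, ⇑e = φ := by
  have hinj := hT.injective_of_bijOn_children hφ hφx
  have hmem {u v : V} : φ v ∈ T.children x (φ u) ↔ v ∈ T.children x u := by
    rw [← (hφ u).image_eq, hinj.mem_set_image]
  refine ⟨⟨Equiv.ofBijective φ ⟨hinj, hT.surjective_of_bijOn_children hφ hφx⟩, ?_⟩, rfl⟩
  intro u v
  change T.Adj (φ u) (φ v) ↔ T.Adj u v
  rw [hT.adj_iff_mem_children (x := x), hT.adj_iff_mem_children (x := x), hmem, hmem]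

end ChildBijective

open scoped Classical in
variable (T) in
/-- Built outwards from the root `x`: once `w` is sent to `w'`, its children are sent by `σ w w'`
(`h.choose` is the parent of `v`). -/
noncomputable def extendFromRoot (x : V) (σ : V → V → V → V) (v : V) : V :=
  if h : ∃ u, T.Adj u v ∧ T.dist x u + 1 = T.dist x v then
    σ h.choose (extendFromRoot x σ h.choose) v
  else x
termination_by T.dist x v
decreasing_by have := h.choose_spec.2; omega

variable {σ : V → V → V → V}

lemma extendFromRoot_root : T.extendFromRoot x σ x = x := by
  rw [extendFromRoot, dif_neg (by simp)]

lemma Connected.extendFromRoot_of_ne (hconn : T.Connected) {v : V} (hv : v ≠ x) :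
    T.extendFromRoot x σ v = σ (T.parent x v) (T.extendFromRoot x σ (T.parent x v)) v := by
  have h := hconn.exists_adj_dist_add_one hv
  rw [extendFromRoot, dif_pos h, parent, dif_pos h]

lemma IsTree.exists_iso_extendFromRoot (hT : T.IsTree)
    (hσ : ∀ w, T.dist x (T.extendFromRoot x σ w) = T.dist x w →
      BijOn (σ w (T.extendFromRoot x σ w)) (T.children x w)
        (T.children x (T.extendFromRoot x σ w))) :
    ∃ e : T ≃g T, ⇑e = T.extendFromRoot x σ := by
  set φ := T.extendFromRoot x σ
  have heq (w : V) : EqOn (σ w (φ w)) φ (T.children x w) := fun v hv => by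
    obtain ⟨rfl, hvx⟩ := hT.mem_children_iff.mp hv
    exact (hT.connected.extendFromRoot_of_ne hvx).symm
  have hdist (v : V) : T.dist x (φ v) = T.dist x v := by
    induction hn : T.dist x v generalizing v with
    | zero => simp [φ, ← hT.connected.dist_eq_zero_iff.mp hn, extendFromRoot_root]
    | succ n ih =>
      have hv : v ≠ x := by rintro rfl; simp at hn
      have hpar := hT.connected.parent_spec hv
      have hpφ : T.dist x (φ (T.parent x v)) = T.dist x (T.parent x v) := by
        rw [ih (T.parent x v) (by omega)]; omega
      have hmem := (hσ _ hpφ).mapsTo (hT.mem_children_iff.mpr ⟨rfl, hv⟩)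
      rw [heq _ (hT.mem_children_iff.mpr ⟨rfl, hv⟩)] at hmem
      have := hmem.2
      omega
  exact hT.exists_iso_of_bijOn_children (fun w => (hσ w (hdist w)).congr (heq w))
    extendFromRoot_root

open scoped Classical in
variable (T) in
/-- Being the identity for `w = w'` is what makes the automorphism built from `steer` fix every
branch at `x` other than those of `t` and `t'`. -/
noncomputable def childBij (x w w' : V) : V → V :=
  if h : ∃ g : V → V, BijOn g (T.children x w) (T.children x w') ∧ (w = w' → g = id) then
    h.choose
  else id

lemma childBij_self (w : V) : T.childBij x w w = id := by
  have h : ∃ g : V → V, BijOn g (T.children x w) (T.children x w) ∧ (w = w → g = id) :=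
    ⟨id, bijOn_id _, fun _ => rfl⟩
  rw [childBij, dif_pos h]
  exact h.choose_spec.2 rfl

lemma IsTree.bijOn_childBij (hT : T.IsTree) {k : ℕ} (hreg : ∀ v, Nat.card (T.neighborSet v) = k)
    (hk : k ≠ 0) {w w' : V} (hd : T.dist x w = T.dist x w') :
    BijOn (T.childBij x w w') (T.children x w) (T.children x w') := by
  by_cases hww : w = w'
  · rw [← hww, childBij_self]
    exact bijOn_id _
  · obtain ⟨g, hg⟩ := hT.exists_bijOn_children hreg hk hd
    have h : ∃ g : V → V, BijOn g (T.children x w) (T.children x w') ∧ (w = w' → g = id) :=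
      ⟨g, hg, fun h => absurd h hww⟩
    rw [childBij, dif_pos h]
    exact h.choose_spec.1

open scoped Classical in
variable (T) in
/-- The child maps of an automorphism fixing `x` and carrying the geodesic from `x` to `t'` onto
the geodesic from `x` to `t`. -/
noncomputable def steer (x t t' w w' : V) : V → V :=
  if T.dist x w < T.dist x t ∧ w = T.ancestor x t' (T.dist x w) then
    Equiv.swap (T.childBij x w w' (T.ancestor x t' (T.dist x w + 1)))
      (T.ancestor x t (T.dist x w + 1)) ∘ T.childBij x w w'
  else T.childBij x w w'

section Steer

variable {t t' : V} (hr : T.dist x t' = T.dist x t)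
include hr

lemma IsTree.bijOn_steer (hT : T.IsTree) {k : ℕ} (hreg : ∀ v, Nat.card (T.neighborSet v) = k)
    (hk : k ≠ 0) {w w' : V} (hd : T.dist x w = T.dist x w')
    (hspine : T.dist x w < T.dist x t → w = T.ancestor x t' (T.dist x w) →
      w' = T.ancestor x t (T.dist x w)) :
    BijOn (T.steer x t t' w w') (T.children x w) (T.children x w') := by
  classical
  have hbij := hT.bijOn_childBij hreg hk hd
  rw [steer]
  split_ifs with h
  · obtain ⟨hlt, hw⟩ := h
    have hw' := hspine hlt hw
    have ha : T.childBij x w w' (T.ancestor x t' (T.dist x w + 1)) ∈ T.children x w' := by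
      have := hT.connected.ancestor_succ_mem_children (x := x) (v := t') (i := T.dist x w)
        (by omega)
      rw [← hw] at this
      exact hbij.mapsTo this
    have hb : T.ancestor x t (T.dist x w + 1) ∈ T.children x w' := by
      rw [hw']
      exact hT.connected.ancestor_succ_mem_children (by omega)
    exact (Equiv.bijOn_swap ha hb).comp hbij
  · exact hbij

lemma Connected.extendFromRoot_steer_ancestor (hconn : T.Connected) {i : ℕ}
    (hi : i ≤ T.dist x t) :
    T.extendFromRoot x (T.steer x t t') (T.ancestor x t' i) = T.ancestor x t i := by
  classical
  induction i with
  | zero => rw [hconn.ancestor_zero, hconn.ancestor_zero, extendFromRoot_root]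
  | succ i ih =>
    have hne : T.ancestor x t' (i + 1) ≠ x := by
      rw [ne_eq, eq_comm, ← hconn.dist_eq_zero_iff, hconn.dist_ancestor (by omega)]
      omega
    have hdi : T.dist x (T.ancestor x t' i) = i := hconn.dist_ancestor (by omega)
    rw [hconn.extendFromRoot_of_ne hne, parent_ancestor_succ (by omega), ih (by omega), steer,
      if_pos ⟨by omega, by rw [hdi]⟩, hdi, Function.comp_apply, Equiv.swap_apply_left]

lemma Connected.extendFromRoot_steer_eq_self (hconn : T.Connected) {v : V} (hv : v ≠ x)
    (ht : T.ancestor x v 1 ≠ T.ancestor x t 1) (ht' : T.ancestor x v 1 ≠ T.ancestor x t' 1) :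
    T.extendFromRoot x (T.steer x t t') v = v := by
  classical
  induction hn : T.dist x v generalizing v with
  | zero => exact absurd (hconn.dist_eq_zero_iff.mp hn).symm hv
  | succ n ih =>
    have hpar := hconn.parent_spec hv
    rw [hconn.extendFromRoot_of_ne hv]
    rcases n with _ | n
    · have hpx : T.parent x v = x := (hconn.dist_eq_zero_iff.mp (by omega)).symm
      have hv1 : T.ancestor x v 1 = v := by rw [show 1 = T.dist x v by omega, ancestor_dist]
      rw [hv1] at ht ht'
      rw [hpx, extendFromRoot_root, steer, childBij_self]
      split_ifs
      · simp only [Function.comp_apply, id, dist_self, zero_add]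
        exact Equiv.swap_apply_of_ne_of_ne ht' ht
      · rfl
    · have hpv : T.parent x v = T.ancestor x v (n + 1) := by
        rw [← parent_ancestor_succ (by omega), ← hn, ancestor_dist]
      have hp1 : T.ancestor x (T.parent x v) 1 = T.ancestor x v 1 := by
        rw [hpv, hconn.ancestor_ancestor (by omega) (by omega)]
      have hpx : T.parent x v ≠ x := by
        rw [ne_eq, eq_comm, ← hconn.dist_eq_zero_iff]; omega
      rw [← hp1] at ht ht'
      rw [ih hpx ht ht' (by omega), steer, childBij_self]
      split_ifs with h
      · refine absurd ?_ ht'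
        conv_lhs => rw [h.2]
        exact hconn.ancestor_ancestor (by omega) (by omega)
      · rfl

end Steer

lemma IsTree.exists_iso_apply_eq_and_fix (hT : T.IsTree) {k : ℕ}
    (hreg : ∀ v, Nat.card (T.neighborSet v) = k) (hk : k ≠ 0) {t t' : V}
    (hr : T.dist x t' = T.dist x t) :
    ∃ e : T ≃g T, e t' = t ∧ ∀ v, T.dist v t = T.dist v x + T.dist x t →
      T.dist v t' = T.dist v x + T.dist x t' → e v = v := by
  have hconn := hT.connected
  by_cases ht : T.dist x t = 0
  · have hxt := hconn.dist_eq_zero_iff.mp ht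
    have hxt' := hconn.dist_eq_zero_iff.mp (hr.trans ht)
    exact ⟨RelIso.refl _, hxt'.symm.trans hxt, fun _ _ _ => rfl⟩
  have hspine {w : V} (hlt : T.dist x w < T.dist x t) (hw : w = T.ancestor x t' (T.dist x w)) :
      T.extendFromRoot x (T.steer x t t') w = T.ancestor x t (T.dist x w) := by
    conv_lhs => rw [hw]
    exact hconn.extendFromRoot_steer_ancestor hr hlt.le
  obtain ⟨e, he⟩ := hT.exists_iso_extendFromRoot (σ := T.steer x t t')
    fun w hd => hT.bijOn_steer hr hreg hk hd.symm hspine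
  refine ⟨e, ?_, fun v hvt hvt' => ?_⟩
  · calc e t' = T.extendFromRoot x (T.steer x t t') (T.ancestor x t' (T.dist x t)) := by
          rw [he, ← hr, ancestor_dist]
      _ = t := by rw [hconn.extendFromRoot_steer_ancestor hr le_rfl, ancestor_dist]
  · rw [he]
    by_cases hv : v = x
    · rw [hv, extendFromRoot_root]
    have hv1 : 1 ≤ T.dist x v := by
      rw [Nat.one_le_iff_ne_zero, ne_eq, hconn.dist_eq_zero_iff]; exact Ne.symm hv
    exact hconn.extendFromRoot_steer_eq_self hr hv
      (hconn.ancestor_one_ne_of_dist_eq_add hvt hv1 (by omega))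
      (hconn.ancestor_one_ne_of_dist_eq_add hvt' hv1 (by omega))

lemma Hom.edist_apply_le {W : Type*} {G : SimpleGraph W} (f : T →g G) (u v : V) :
    G.edist (f u) (f v) ≤ T.edist u v := by
  by_cases h : T.edist u v = ⊤
  · exact h ▸ le_top
  · obtain ⟨P, hP⟩ := exists_walk_of_edist_ne_top h
    rw [← hP, ← Walk.length_map f]
    exact edist_le _

lemma Iso.dist_apply {W : Type*} {G : SimpleGraph W} (e : T ≃g G) (u v : V) :
    G.dist (e u) (e v) = T.dist u v := by
  have h₁ : G.edist (e u) (e v) ≤ T.edist u v := Hom.edist_apply_le e.toHom u v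
  have h₂ : T.edist (e.symm (e u)) (e.symm (e v)) ≤ G.edist (e u) (e v) :=
    Hom.edist_apply_le e.symm.toHom _ _
  rw [e.symm_apply_apply, e.symm_apply_apply] at h₂
  rw [dist, dist, le_antisymm h₁ h₂]

lemma IsTree.dist_apply_add_of_nonbacktracking (hT : T.IsTree) {p : ℤ → V}
    (hadj : ∀ n, T.Adj (p n) (p (n + 1))) (hpinj : ∀ n, p n ≠ p (n + 2)) (i : ℤ) (n : ℕ) :
    T.dist (p i) (p (i + n)) = n := by
  induction n using Nat.strong_induction_on with
  | _ n ih =>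
  match n with
  | 0 => simp
  | 1 => simpa using hadj i
  | n + 2 =>
    have h₀ := ih n (by omega)
    have h₁ := ih (n + 1) (by omega)
    push_cast at h₀ h₁ ⊢
    have hstep : T.Adj (p (i + (n + 1))) (p (i + (n + 2))) := by
      convert hadj (i + (n + 1)) using 2; ring
    rcases hT.dist_eq_dist_add_one_of_adj (p i) hstep with h | h
    · refine absurd ?_ (hpinj (i + n))
      rw [add_assoc, hT.eq_parent_of_adj (x := p i) (u := p (i + n)) (v := p (i + (n + 1)))
        (by simpa [add_assoc] using hadj (i + n)) (by omega),
        hT.eq_parent_of_adj hstep.symm h.symm]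
    · omega

lemma busemann_apply_iso {p : ℤ → V} {b : V → ℤ}
    (hb : ∀ t, ∀ᶠ n : ℕ in atTop, (T.dist (p (-(n : ℤ))) t : ℤ) - (n : ℤ) = b t)
    (e : T ≃g T) (hfix : ∀ᶠ n : ℕ in atTop, e (p (-(n : ℤ))) = p (-(n : ℤ))) (s : V) :
    b (e s) = b s := by
  obtain ⟨n, hs, hes, hn⟩ := ((hb s).and ((hb (e s)).and hfix)).exists
  rw [← hs, ← hes, ← hn, Iso.dist_apply, hn]

end SimpleGraph

theorem busemann_levels_invariant_general
    {V A : Type*}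
    (k : ℕ) (hk : 2 ≤ k)
    (T : SimpleGraph V) (hconn : T.Connected) (hacyc : T.IsAcyclic)
    (hreg : ∀ v : V, Nat.card (T.neighborSet v) = k)
    (p : ℤ → V)
    (hadj : ∀ n : ℤ, T.Adj (p n) (p (n + 1)))
    (hpinj : ∀ n : ℤ, p n ≠ p (n + 2))
    (b : V → ℤ)
    (hb : ∀ t : V, ∀ᶠ n : ℕ in atTop, (T.dist (p (-(n : ℤ))) t : ℤ) - (n : ℤ) = b t)
    (f : (V → A) → (V → A))
    (hcomm : ∀ (g : T ≃g T) (x : V → A),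
      f (fun t => x (g.symm t)) = fun t => f x (g.symm t)) :
    ∀ y : V → A, (∀ t t' : V, b t = b t' → y t = y t') →
      ∀ t t' : V, b t = b t' → f y t = f y t' := by
  intro y hy t t' hbt
  have hT : T.IsTree := ⟨hconn, hacyc⟩
  obtain ⟨N, hN⟩ := eventually_atTop.mp ((hb t).and (hb t'))
  have hx := hN N le_rfl
  obtain ⟨e, het, hfix⟩ := hT.exists_iso_apply_eq_and_fix (x := p (-N)) hreg (by omega)
    (t := t) (t' := t') (by omega)
  have hray (n : ℕ) (hn : N ≤ n) : e (p (-n)) = p (-n) := by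
    have hdist := hT.dist_apply_add_of_nonbacktracking hadj hpinj (-n) (n - N)
    rw [show -(n : ℤ) + ((n - N : ℕ) : ℤ) = -N by omega] at hdist
    have := hN n hn
    exact hfix _ (by omega) (by omega)
  have hye : (fun s => y (e s)) = y :=
    funext fun s => hy _ _ (SimpleGraph.busemann_apply_iso hb e (eventually_atTop.mpr ⟨N, hray⟩) s)
  have := congrFun (hcomm e.symm y) t'
  simp only [RelIso.symm_symm, hye, het] at this
  exact this.symm

/-- On the `k`-regular tree, the set `Y` of configurations
that are constant on the level sets of the Busemann function `b` of a
bi-infinite injective path is invariant under every cellular automaton for the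
full automorphism group action. -/
theorem busemann_levels_invariant
    {V A : Type*} [Finite A] [TopologicalSpace A] [DiscreteTopology A]
    (k : ℕ) (hk : 2 ≤ k)
    (T : SimpleGraph V) (hconn : T.Connected) (hacyc : T.IsAcyclic)
    (hreg : ∀ v : V, Nat.card (T.neighborSet v) = k)
    (p : ℤ → V)
    (hadj : ∀ n : ℤ, T.Adj (p n) (p (n + 1)))
    (hpinj : ∀ n : ℤ, p n ≠ p (n + 2))
    (b : V → ℤ)
    (hb : ∀ t : V, ∀ᶠ n : ℕ in atTop, (T.dist (p (-(n : ℤ))) t : ℤ) - (n : ℤ) = b t)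
    (f : (V → A) → (V → A)) (hf : Continuous f)
    (hcomm : ∀ (g : T ≃g T) (x : V → A),
      f (fun t => x (g.symm t)) = fun t => f x (g.symm t)) :
    ∀ y : V → A, (∀ t t' : V, b t = b t' → y t = y t') →
      ∀ t t' : V, b t = b t' → f y t = f y t' :=
  busemann_levels_invariant_general k hk T hconn hacyc hreg p hadj hpinj b hb f hcomm
end

section
/- Let k ≥ 2, let T be the k-regular tree with vertex set V, let p : ℤ → V be a bi-infinite injective path with Busemann function b, and let A be a finite alphabet. Define φ : A^ℤ → A^V by φ(x)_t = x_{b(t)}; then φ is a homeomorphism onto the set Y of configurations constant on Busemann levels, with φ⁻¹(y)_i = y_{p(i)}. For any cellular automaton f : A^V → A^V on Aut(T) ↷ V, the map f̄ = φ⁻¹ ∘ f ∘ φ : A^ℤ → A^ℤ is well defined, continuous, and commutes with the shift σ (σ(x)_i = x_{i+1}); moreover, if f is asymptotically nilpotent toward 0^V then f̄ is asymptotically nilpotent toward 0^ℤ. -/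
/-!
Every vertex `s` has exactly one neighbour one Busemann level below it, `parent s` (the next
vertex on the geodesic from `s` to `p (-n)` for `n` large); its other `k - 1` neighbours lie one
level above, and any two vertices have a common ancestor. Label the children of every vertex by
`Fin (k - 1)` so that all ancestors of `t` carry the same label, and likewise for `t'`. A vertex
is then determined by its address: an ancestor of `t` and the word of labels leading down from it.
Sending each vertex to the vertex with the same address relative to `t'` is a tree automorphism
that maps `t` to `t'` and shifts `b` by `b t' - b t`.

With `b t = b t'` these automorphisms show that `f` maps configurations constant on levels to
configurations constant on levels, so `f̄` is `φ⁻¹ ∘ f ∘ φ`; the one from `p 0` to `p 1`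
conjugates the shift.
-/

open Filter

section ParentMap

variable {V κ : Type*} {par : V → V} {b : V → ℤ}

theorem height_iterate (hb : ∀ v, b (par v) = b v - 1) (n : ℕ) (v : V) :
    b (par^[n] v) = b v - n := by
  induction n generalizing v with
  | zero => simp
  | succ n ih => rw [Function.iterate_succ_apply, ih, hb]; push_cast; ring

theorem height_apply_of_commute (hb : ∀ v, b (par v) = b v - 1)
    (hmeet : ∀ u v, ∃ n d, par^[n] u = par^[d] v) {g : V → V} (hg : Function.Commute g par)
    (t v : V) : b (g v) = b v + (b (g t) - b t) := by
  obtain ⟨n, d, h⟩ := hmeet v t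
  have hv := height_iterate hb n v
  have ht := height_iterate hb d t
  have hgv := height_iterate hb n (g v)
  have hgt := height_iterate hb d (g t)
  rw [← hg.iterate_right n v, h, hg.iterate_right d t] at hgv
  rw [h] at hv
  linarith

def IsChildLabeling (par : V → V) (lab : V → κ) : Prop :=
  ∀ s, Function.Bijective fun v : {v // par v = s} => lab v

theorem IsChildLabeling.eq_of_iterate_eq {lab : V → κ} (hlab : IsChildLabeling par lab)
    {n : ℕ} {w w' : V} (h : par^[n] w = par^[n] w')
    (hl : ∀ i < n, lab (par^[i] w) = lab (par^[i] w')) : w = w' := by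
  induction n generalizing w w' with
  | zero => exact h
  | succ n ih =>
    have hpar : par w = par w' :=
      ih (by simpa only [← Function.iterate_succ_apply] using h) fun i hi => hl (i + 1) (by omega)
    have := (hlab (par w')).1 (a₁ := ⟨w, hpar⟩) (a₂ := ⟨w', rfl⟩) (hl 0 (by omega))
    exact congrArg Subtype.val this

theorem exists_childLabeling (hb : ∀ v, b (par v) = b v - 1)
    (hκ : ∀ s, Nonempty ({v // par v = s} ≃ κ)) (t : V) (o : κ) :
    ∃ lab : V → κ, IsChildLabeling par lab ∧ ∀ j, lab (par^[j] t) = o := by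
  classical
  let e s := (hκ s).some
  have hchild {s : V} (h : ∃ j, par^[j + 1] t = s) : par (par^[h.choose] t) = s := by
    rw [← Function.iterate_succ_apply' par, h.choose_spec]
  -- relabel so that every ancestor of `t` carries the label `o`
  let σ s : Equiv.Perm κ :=
    if h : ∃ j, par^[j + 1] t = s then Equiv.swap (e s ⟨_, hchild h⟩) o else 1
  refine ⟨fun v => σ (par v) (e (par v) ⟨v, rfl⟩), fun s => ?_, fun j => ?_⟩
  · have : (fun v : {v // par v = s} => σ (par v) (e (par v) ⟨v, rfl⟩)) = (e s).trans (σ s) := by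
      funext ⟨v, hv⟩
      subst hv
      rfl
    rw [this]
    exact Equiv.bijective _
  · have h : ∃ i, par^[i + 1] t = par (par^[j] t) := ⟨j, Function.iterate_succ_apply' ..⟩
    have hj : par^[h.choose] t = par^[j] t := by
      have := congrArg b h.choose_spec
      rw [Function.iterate_succ_apply', hb, hb, height_iterate hb, height_iterate hb] at this
      rw [show h.choose = j by omega]
    simp only [σ, dif_pos h]
    convert Equiv.swap_apply_left _ o using 3
    exact Subtype.ext hj.symm

def SameAddress (par : V → V) (lab lab' : V → κ) (t t' : V) (n d : ℕ) (v w : V) : Prop :=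
  par^[n] v = par^[d] t ∧ par^[n] w = par^[d] t' ∧ ∀ i < n, lab (par^[i] v) = lab' (par^[i] w)

namespace SameAddress

variable {lab lab' : V → κ} {t t' v w : V} {n d : ℕ}

theorem symm (h : SameAddress par lab lab' t t' n d v w) : SameAddress par lab' lab t' t n d w v :=
  ⟨h.2.1, h.1, fun i hi => (h.2.2 i hi).symm⟩

theorem parent (h : SameAddress par lab lab' t t' (n + 1) d v w) :
    SameAddress par lab lab' t t' n d (par v) (par w) := by
  obtain ⟨hv, hw, hl⟩ := h
  refine ⟨?_, ?_, fun i hi => ?_⟩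
  · rwa [← Function.iterate_succ_apply]
  · rwa [← Function.iterate_succ_apply]
  · simpa only [← Function.iterate_succ_apply] using hl (i + 1) (by omega)

theorem add {o : κ} (ht : ∀ j, lab (par^[j] t) = o) (ht' : ∀ j, lab' (par^[j] t') = o)
    (h : SameAddress par lab lab' t t' n d v w) (m : ℕ) :
    SameAddress par lab lab' t t' (n + m) (d + m) v w := by
  obtain ⟨hv, hw, hl⟩ := h
  refine ⟨by rw [add_comm n, add_comm d, Function.iterate_add_apply, Function.iterate_add_apply, hv],
    by rw [add_comm n, add_comm d, Function.iterate_add_apply, Function.iterate_add_apply, hw],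
    fun i hi => ?_⟩
  rcases lt_or_ge i n with hin | hin
  · exact hl i hin
  · obtain ⟨j, rfl⟩ := Nat.exists_eq_add_of_le hin
    rw [add_comm n j, Function.iterate_add_apply, Function.iterate_add_apply, hv, hw,
      ← Function.iterate_add_apply, ← Function.iterate_add_apply, ht, ht']

theorem exists_of_iterate_eq (hlab' : IsChildLabeling par lab') (h : par^[n] v = par^[d] t) :
    ∃ w, SameAddress par lab lab' t t' n d v w := by
  induction n generalizing v with
  | zero => exact ⟨par^[d] t', h, rfl, by simp⟩
  | succ n ih =>
    obtain ⟨w₀, hw₀, hw₀', hl⟩ := ih (v := par v) (by rwa [← Function.iterate_succ_apply])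
    obtain ⟨⟨w, hw⟩, hlw⟩ := (hlab' w₀).2 (lab v)
    refine ⟨w, h, by rw [Function.iterate_succ_apply, hw, hw₀'], fun i hi => ?_⟩
    rcases i with _ | i
    · exact hlw.symm
    · simpa only [Function.iterate_succ_apply, hw] using hl i (by omega)

theorem unique (hb : ∀ v, b (par v) = b v - 1) (hlab' : IsChildLabeling par lab') {o : κ}
    (ht : ∀ j, lab (par^[j] t) = o) (ht' : ∀ j, lab' (par^[j] t') = o) {n' d' : ℕ} {w' : V}
    (h : SameAddress par lab lab' t t' n d v w) (h' : SameAddress par lab lab' t t' n' d' v w') :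
    w = w' := by
  have hnd : d + n' = d' + n := by
    have e := congrArg b h.1
    have e' := congrArg b h'.1
    rw [height_iterate hb, height_iterate hb] at e e'
    omega
  obtain ⟨-, hw, hl⟩ := h.add ht ht' n'
  obtain ⟨-, hw', hl'⟩ := h'.add ht ht' n
  rw [hnd, ← hw', add_comm n' n] at hw
  exact hlab'.eq_of_iterate_eq hw fun i hi => (hl i hi).symm.trans (hl' i (by omega))

end SameAddress

theorem exists_equiv_commute_of_childLabeling (hb : ∀ v, b (par v) = b v - 1)
    (hmeet : ∀ u v, ∃ n d, par^[n] u = par^[d] v) {lab lab' : V → κ}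
    (hlab : IsChildLabeling par lab) (hlab' : IsChildLabeling par lab') {t t' : V} {o : κ}
    (ht : ∀ j, lab (par^[j] t) = o) (ht' : ∀ j, lab' (par^[j] t') = o) :
    ∃ g : V ≃ V, g t = t' ∧ Function.Commute g par := by
  let R v w := ∃ n d, SameAddress par lab lab' t t' n d v w
  have hex v : ∃ w, R v w := by
    obtain ⟨n, d, h⟩ := hmeet v t
    obtain ⟨w, hw⟩ := SameAddress.exists_of_iterate_eq hlab' h
    exact ⟨w, n, d, hw⟩
  have huniq {v w w'} : R v w → R v w' → w = w' := by
    rintro ⟨n, d, h⟩ ⟨n', d', h'⟩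
    exact h.unique hb hlab' ht ht' h'
  have hex' w : ∃ v, R v w := by
    obtain ⟨n, d, h⟩ := hmeet w t'
    obtain ⟨v, hv⟩ := SameAddress.exists_of_iterate_eq (lab := lab') (t' := t) hlab h
    exact ⟨v, n, d, hv.symm⟩
  have huniq' {v v' w} : R v w → R v' w → v = v' := by
    rintro ⟨n, d, h⟩ ⟨n', d', h'⟩
    exact h.symm.unique hb hlab ht' ht h'.symm
  choose g hg using hex
  have hbij : Function.Bijective g := by
    refine ⟨fun v v' h => huniq' (hg v) (h ▸ hg v'), fun w => ?_⟩
    obtain ⟨v, hv⟩ := hex' w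
    exact ⟨v, huniq (hg v) hv⟩
  refine ⟨Equiv.ofBijective g hbij, huniq (hg t) ⟨0, 0, rfl, rfl, by simp⟩, fun v => ?_⟩
  obtain ⟨n, d, h⟩ := hg v
  exact huniq (hg (par v)) ⟨n, d + 1, (h.add ht ht' 1).parent⟩

theorem exists_equiv_commute (hb : ∀ v, b (par v) = b v - 1)
    (hmeet : ∀ u v, ∃ n d, par^[n] u = par^[d] v) (hκ : ∀ s, Nonempty ({v // par v = s} ≃ κ))
    (t t' : V) : ∃ g : V ≃ V, g t = t' ∧ Function.Commute g par := by
  let o : κ := (hκ (par t)).some ⟨t, rfl⟩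
  obtain ⟨lab, hlab, ht⟩ := exists_childLabeling hb hκ t o
  obtain ⟨lab', hlab', ht'⟩ := exists_childLabeling hb hκ t' o
  exact exists_equiv_commute_of_childLabeling hb hmeet hlab hlab' ht ht'

end ParentMap

namespace SimpleGraph.IsTree

variable {V : Type*} {G : SimpleGraph V}

theorem exists_adj_dist_add_one (hG : G.IsTree) {y s : V} (hne : y ≠ s) :
    ∃ u, G.Adj u s ∧ G.dist y u + 1 = G.dist y s := by
  obtain ⟨w, hw⟩ := hG.connected.exists_walk_length_eq_dist y s
  have hnil : ¬w.Nil := fun h => hne h.eq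
  refine ⟨w.penultimate, w.adj_penultimate hnil, le_antisymm ?_ ?_⟩
  · rw [← hw, ← Walk.length_dropLast_add_one hnil]
    exact Nat.add_le_add_right (dist_le _) 1
  · have := hG.connected.dist_triangle (u := y) (v := w.penultimate) (w := s)
    rwa [dist_eq_one_iff_adj.2 (w.adj_penultimate hnil)] at this

theorem eq_of_adj_of_dist_add_one (hG : G.IsTree) {y s u u' : V} (hu : G.Adj u s)
    (hu' : G.Adj u' s) (hd : G.dist y u + 1 = G.dist y s) (hd' : G.dist y u' + 1 = G.dist y s) :
    u = u' := by
  obtain ⟨q, hq⟩ := hG.connected.exists_walk_length_eq_dist y u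
  obtain ⟨q', hq'⟩ := hG.connected.exists_walk_length_eq_dist y u'
  have hpath := (q.concat hu).isPath_of_length_eq_dist (by rw [Walk.length_concat, hq, hd])
  have hpath' := (q'.concat hu').isPath_of_length_eq_dist (by rw [Walk.length_concat, hq', hd'])
  have := congrArg (fun r : G.Path y s => r.1.penultimate)
    ((hG.isAcyclic.subsingleton_path y s).elim ⟨_, hpath⟩ ⟨_, hpath'⟩)
  simpa only [Walk.penultimate_concat] using this

theorem dist_eq_of_adj_of_ne_add_two (hG : G.IsTree) {p : ℤ → V}
    (hadj : ∀ n, G.Adj (p n) (p (n + 1))) (hp : ∀ n, p n ≠ p (n + 2)) (m : ℤ) (N : ℕ) :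
    G.dist (p m) (p (m + N)) = N := by
  suffices G.dist (p m) (p (m + N)) = N ∧ G.dist (p m) (p (m + N + 1)) = N + 1 from this.1
  induction N with
  | zero => simpa using hadj m
  | succ N ih =>
    obtain ⟨h0, h1⟩ := ih
    push_cast
    rw [show m + (N + 1 : ℤ) = m + N + 1 by ring, show m + N + 1 + 1 = m + N + 2 by ring]
    refine ⟨h1, ?_⟩
    have hadj₁ : G.Adj (p (m + N + 2)) (p (m + N + 1)) :=
      (by simpa [add_assoc] using hadj (m + N + 1) : G.Adj _ _).symm
    rcases hG.dist_eq_dist_add_one_of_adj (p m) hadj₁ with h | h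
    · rw [h, h1]
    · have := hG.eq_of_adj_of_dist_add_one (hadj (m + N)) hadj₁ (by rw [h0, h1]) h.symm
      exact absurd (by simpa [add_assoc] using this) (hp (m + N))

end SimpleGraph.IsTree

section Busemann

open SimpleGraph

variable {V : Type*}

structure IsBusemann (T : SimpleGraph V) (p : ℤ → V) (b : V → ℤ) : Prop where
  isTree : T.IsTree
  adj : ∀ n, T.Adj (p n) (p (n + 1))
  ne_add_two : ∀ n, p n ≠ p (n + 2)
  eventually_dist_sub : ∀ t, ∀ᶠ n : ℕ in atTop, (T.dist (p (-(n : ℤ))) t : ℤ) - n = b t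

def BusemannAttainedFrom (T : SimpleGraph V) (p : ℤ → V) (b : V → ℤ) (N : ℕ) (s : V) : Prop :=
  ∀ n ≥ N, (T.dist (p (-(n : ℤ))) s : ℤ) = n + b s

theorem BusemannAttainedFrom.mono {T : SimpleGraph V} {p : ℤ → V} {b : V → ℤ} {N M : ℕ} {s : V}
    (h : BusemannAttainedFrom T p b N s) (hNM : N ≤ M) : BusemannAttainedFrom T p b M s :=
  fun n hn => h n (hNM.trans hn)

namespace IsBusemann

variable {T : SimpleGraph V} {p : ℤ → V} {b : V → ℤ}

theorem dist_path (hB : IsBusemann T p b) {i j : ℤ} (h : i ≤ j) :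
    (T.dist (p i) (p j) : ℤ) = j - i := by
  have := hB.isTree.dist_eq_of_adj_of_ne_add_two hB.adj hB.ne_add_two i (j - i).toNat
  rw [show i + ((j - i).toNat : ℤ) = j by omega] at this
  omega

theorem exists_attainedFrom (hB : IsBusemann T p b) (s : V) :
    ∃ N, BusemannAttainedFrom T p b N s := by
  obtain ⟨N, hN⟩ := eventually_atTop.1 (hB.eventually_dist_sub s)
  exact ⟨N, fun n hn => by linarith [hN n hn]⟩

theorem apply_path (hB : IsBusemann T p b) (i : ℤ) : b (p i) = i := by
  obtain ⟨N, hN⟩ := hB.exists_attainedFrom (p i)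
  have h := hN (max N (-i).toNat) (le_max_left ..)
  rw [hB.dist_path (by omega)] at h
  omega

theorem exists_adj_attainedFrom (hB : IsBusemann T p b) {N : ℕ} {s : V}
    (hs : BusemannAttainedFrom T p b N s) (h1 : 1 ≤ N + b s) :
    ∃ u, T.Adj u s ∧ b u = b s - 1 ∧ BusemannAttainedFrom T p b N u := by
  have hne : p (-N) ≠ s := by
    rintro rfl
    have := hs N le_rfl
    simp only [SimpleGraph.dist_self, Nat.cast_zero] at this
    omega
  obtain ⟨u, hu, hdu⟩ := hB.isTree.exists_adj_dist_add_one hne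
  -- `≤` through `p (-N)`, `≥` since `s` is one step further
  have hdist n (hn : N ≤ n) : (T.dist (p (-(n : ℤ))) u : ℤ) = n + b s - 1 := by
    have h₁ := hB.isTree.connected.dist_triangle (u := p (-(n : ℤ))) (v := p (-N)) (w := u)
    have h₂ := hB.isTree.connected.dist_triangle (u := p (-(n : ℤ))) (v := u) (w := s)
    have h₃ := hB.dist_path (i := -n) (j := -N) (by omega)
    rw [dist_eq_one_iff_adj.2 hu] at h₂
    have := hs n hn
    have := hs N le_rfl
    omega
  have hbu : b u = b s - 1 := by
    obtain ⟨M, hM⟩ := hB.exists_attainedFrom u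
    have := hM (max N M) (le_max_right ..)
    have := hdist (max N M) (le_max_left ..)
    omega
  exact ⟨u, hu, hbu, fun n hn => by rw [hdist n hn, hbu]; ring⟩

theorem eq_of_adj_of_apply_eq_sub_one (hB : IsBusemann T p b) {s u u' : V} (hu : T.Adj u s)
    (hu' : T.Adj u' s) (hbu : b u = b s - 1) (hbu' : b u' = b s - 1) : u = u' := by
  obtain ⟨N, hN⟩ := hB.exists_attainedFrom s
  obtain ⟨M, hM⟩ := hB.exists_attainedFrom u
  obtain ⟨M', hM'⟩ := hB.exists_attainedFrom u'
  have hs := hN (max N (max M M')) (by omega)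
  have h := hM (max N (max M M')) (by omega)
  have h' := hM' (max N (max M M')) (by omega)
  exact hB.isTree.eq_of_adj_of_dist_add_one (y := p (-((max N (max M M') : ℕ) : ℤ))) hu hu'
    (by omega) (by omega)

theorem existsUnique_parent (hB : IsBusemann T p b) (s : V) : ∃! u, T.Adj u s ∧ b u = b s - 1 := by
  obtain ⟨N, hN⟩ := hB.exists_attainedFrom s
  obtain ⟨u, hu, hbu, -⟩ :=
    hB.exists_adj_attainedFrom (hN.mono (le_max_left N (1 - b s).toNat)) (by omega)
  exact ⟨u, ⟨hu, hbu⟩, fun u' ⟨hu', hbu'⟩ => hB.eq_of_adj_of_apply_eq_sub_one hu' hu hbu' hbu⟩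

noncomputable def parent (hB : IsBusemann T p b) (s : V) : V := (hB.existsUnique_parent s).choose

theorem parent_adj (hB : IsBusemann T p b) (s : V) : T.Adj (hB.parent s) s :=
  (hB.existsUnique_parent s).choose_spec.1.1

theorem apply_parent (hB : IsBusemann T p b) (s : V) : b (hB.parent s) = b s - 1 :=
  (hB.existsUnique_parent s).choose_spec.1.2

theorem eq_parent (hB : IsBusemann T p b) {u s : V} (h : T.Adj u s) (hbu : b u = b s - 1) :
    u = hB.parent s :=
  (hB.existsUnique_parent s).choose_spec.2 u ⟨h, hbu⟩

theorem adj_iff (hB : IsBusemann T p b) {u v : V} :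
    T.Adj u v ↔ hB.parent u = v ∨ hB.parent v = u := by
  refine ⟨fun h => ?_, ?_⟩
  · obtain ⟨N, hN⟩ := hB.exists_attainedFrom u
    obtain ⟨M, hM⟩ := hB.exists_attainedFrom v
    have hu := hN (max N M) (le_max_left ..)
    have hv := hM (max N M) (le_max_right ..)
    rcases hB.isTree.dist_eq_dist_add_one_of_adj (p (-(max N M : ℕ) : ℤ)) h with h' | h'
    · exact Or.inl (hB.eq_parent h.symm (by omega)).symm
    · exact Or.inr (hB.eq_parent h (by omega)).symm
  · rintro (rfl | rfl)
    exacts [(hB.parent_adj u).symm, hB.parent_adj v]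

theorem attainedFrom_parent (hB : IsBusemann T p b) {N : ℕ} {s : V}
    (hs : BusemannAttainedFrom T p b N s) (h1 : 1 ≤ N + b s) :
    BusemannAttainedFrom T p b N (hB.parent s) := by
  obtain ⟨u, hu, hbu, hN⟩ := hB.exists_adj_attainedFrom hs h1
  rwa [← hB.eq_parent hu hbu]

theorem iterate_parent_of_attainedFrom (hB : IsBusemann T p b) {N j : ℕ} {s : V}
    (hs : BusemannAttainedFrom T p b N s) (hj : N + b s = j) : hB.parent^[j] s = p (-N) := by
  induction j generalizing s with
  | zero =>
    have := hs N le_rfl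
    rw [Function.iterate_zero_apply]
    exact ((hB.isTree.connected.dist_eq_zero_iff).1 (by omega)).symm
  | succ j ih =>
    rw [Function.iterate_succ_apply]
    exact ih (hB.attainedFrom_parent hs (by omega)) (by rw [hB.apply_parent]; omega)

theorem exists_iterate_parent_eq (hB : IsBusemann T p b) (u v : V) :
    ∃ n d, hB.parent^[n] u = hB.parent^[d] v := by
  obtain ⟨N, hN⟩ := hB.exists_attainedFrom u
  obtain ⟨M, hM⟩ := hB.exists_attainedFrom v
  set L := max (max N M) (max (-b u).toNat (-b v).toNat) with hL
  exact ⟨(L + b u).toNat, (L + b v).toNat,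
    (hB.iterate_parent_of_attainedFrom (hN.mono (M := L) (by omega)) (by omega)).trans
      (hB.iterate_parent_of_attainedFrom (hM.mono (M := L) (by omega)) (by omega)).symm⟩

theorem nonempty_equiv_children (hB : IsBusemann T p b) {k : ℕ} (hk : 2 ≤ k)
    (hreg : ∀ v, Nat.card (T.neighborSet v) = k) (s : V) :
    Nonempty ({v // hB.parent v = s} ≃ Fin (k - 1)) := by
  have hchildren : {v | hB.parent v = s} = T.neighborSet s \ {hB.parent s} := by
    ext v
    simp only [Set.mem_ofPred_eq, Set.mem_sdiff, mem_neighborSet, Set.mem_singleton_iff, hB.adj_iff]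
    constructor
    · rintro rfl
      refine ⟨Or.inr rfl, fun h => ?_⟩
      have := congrArg b h
      rw [hB.apply_parent, hB.apply_parent] at this
      omega
    · rintro ⟨h | h, hne⟩
      exacts [absurd h.symm hne, h]
  have : Finite (T.neighborSet s) := Nat.finite_of_card_ne_zero (by rw [hreg]; omega)
  have : Finite {v // hB.parent v = s} :=
    ((Set.toFinite (T.neighborSet s)).subset (hchildren.trans_subset Set.sdiff_subset)).to_subtype
  have hcard : Nat.card {v // hB.parent v = s} = k - 1 := by
    change Nat.card ({v | hB.parent v = s} : Set V) = k - 1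
    rw [hchildren, Nat.card_coe_set_eq, Set.ncard_sdiff_singleton_of_mem
      (show hB.parent s ∈ T.neighborSet s from (hB.parent_adj s).symm),
      ← Nat.card_coe_set_eq, hreg]
  exact ⟨Finite.equivFinOfCardEq hcard⟩

theorem exists_iso (hB : IsBusemann T p b) {k : ℕ} (hk : 2 ≤ k)
    (hreg : ∀ v, Nat.card (T.neighborSet v) = k) (t t' : V) :
    ∃ g : T ≃g T, g t = t' ∧ ∀ s, b (g s) = b s + (b t' - b t) := by
  obtain ⟨g, hgt, hg⟩ := exists_equiv_commute hB.apply_parent hB.exists_iterate_parent_eq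
    (hB.nonempty_equiv_children hk hreg) t t'
  refine ⟨⟨g, fun {u v} => ?_⟩, hgt, fun s => ?_⟩
  · rw [hB.adj_iff, hB.adj_iff, ← hg u, ← hg v, g.injective.eq_iff, g.injective.eq_iff]
  · rw [← hgt]
    exact height_apply_of_commute hB.apply_parent hB.exists_iterate_parent_eq hg t s

end IsBusemann

end Busemann

section CellularAutomaton

variable {V A : Type*} {T : SimpleGraph V} {p : ℤ → V} {b : V → ℤ} {f : (V → A) → (V → A)}

def IsAutEquivariant (T : SimpleGraph V) (f : (V → A) → (V → A)) : Prop :=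
  ∀ (g : T ≃g T) (x : V → A), f (fun t => x (g.symm t)) = fun t => f x (g.symm t)

theorem IsAutEquivariant.comp_iso (hf : IsAutEquivariant T f) (g : T ≃g T) (x : V → A) :
    f (x ∘ g) = f x ∘ g := by
  simpa only [RelIso.symm_symm, Function.comp_def] using hf g.symm x

theorem IsAutEquivariant.apply_eq_of_level_eq (hf : IsAutEquivariant T f)
    (hB : IsBusemann T p b) {k : ℕ} (hk : 2 ≤ k) (hreg : ∀ v, Nat.card (T.neighborSet v) = k)
    (x : ℤ → A) {t t' : V} (h : b t = b t') : f (x ∘ b) t = f (x ∘ b) t' := by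
  obtain ⟨g, hgt, hg⟩ := hB.exists_iso hk hreg t t'
  have hxg : (x ∘ b) ∘ g = x ∘ b := funext fun s => by simp [hg, h]
  calc f (x ∘ b) t = f ((x ∘ b) ∘ g) t := by rw [hxg]
    _ = f (x ∘ b) t' := by rw [hf.comp_iso, Function.comp_apply, hgt]

theorem IsAutEquivariant.apply_shift (hf : IsAutEquivariant T f)
    (hB : IsBusemann T p b) {k : ℕ} (hk : 2 ≤ k) (hreg : ∀ v, Nat.card (T.neighborSet v) = k)
    (x : ℤ → A) (i : ℤ) : f ((fun j => x (j + 1)) ∘ b) (p i) = f (x ∘ b) (p (i + 1)) := by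
  obtain ⟨g, -, hg⟩ := hB.exists_iso hk hreg (p 0) (p 1)
  have hxg : (fun j => x (j + 1)) ∘ b = (x ∘ b) ∘ g := funext fun s => by simp [hg, hB.apply_path]
  rw [hxg, hf.comp_iso]
  exact hf.apply_eq_of_level_eq hB hk hreg x (by simp [hg, hB.apply_path])

end CellularAutomaton

theorem conjugated_CA_on_busemann_levels_general
    {V A : Type*} [TopologicalSpace A]
    (k : ℕ) (hk : 2 ≤ k)
    (T : SimpleGraph V) (hconn : T.Connected) (hacyc : T.IsAcyclic)
    (hreg : ∀ v : V, Nat.card (T.neighborSet v) = k)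
    (p : ℤ → V)
    (hadj : ∀ n : ℤ, T.Adj (p n) (p (n + 1)))
    (hpinj : ∀ n : ℤ, p n ≠ p (n + 2))
    (b : V → ℤ)
    (hb : ∀ t : V, ∀ᶠ n : ℕ in atTop, (T.dist (p (-(n : ℤ))) t : ℤ) - (n : ℤ) = b t)
    (z : A) (f : (V → A) → (V → A)) (hf : Continuous f)
    (hcomm : ∀ (g : T ≃g T) (x : V → A),
      f (fun t => x (g.symm t)) = fun t => f x (g.symm t))
    (φ : (ℤ → A) → (V → A)) (hφ : ∀ (x : ℤ → A) (t : V), φ x t = x (b t))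
    (fbar : (ℤ → A) → (ℤ → A))
    (hfbar : ∀ (x : ℤ → A) (i : ℤ), fbar x i = f (φ x) (p i)) :
    Set.range φ = {y : V → A | ∀ t t' : V, b t = b t' → y t = y t'} ∧
    Continuous φ ∧
    Function.Injective φ ∧
    (∀ (x : ℤ → A) (i : ℤ), φ x (p i) = x i) ∧
    Continuous (fun (y : V → A) (i : ℤ) => y (p i)) ∧
    (∀ x : ℤ → A, φ (fbar x) = f (φ x)) ∧
    Continuous fbar ∧
    (∀ x : ℤ → A, fbar (fun i => x (i + 1)) = fun i => fbar x (i + 1)) ∧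
    ((∀ x : V → A, Tendsto (fun n => f^[n] x) atTop (nhds (fun _ => z))) →
      ∀ x : ℤ → A, Tendsto (fun n => fbar^[n] x) atTop (nhds (fun _ => z))) := by
  have hB : IsBusemann T p b := ⟨⟨hconn, hacyc⟩, hadj, hpinj, hb⟩
  obtain rfl : φ = fun x => x ∘ b := funext fun x => funext (hφ x)
  obtain rfl : fbar = fun x i => f (x ∘ b) (p i) := funext fun x => funext (hfbar x)
  have hequiv : IsAutEquivariant T f := hcomm
  have hbp := hB.apply_path
  have hconj : Function.Semiconj (· ∘ b) (fun x i => f (x ∘ b) (p i)) f := fun x =>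
    funext fun t => hequiv.apply_eq_of_level_eq hB hk hreg x (hbp _)
  have hpcont : Continuous fun (y : V → A) (i : ℤ) => y (p i) := by fun_prop
  refine ⟨?_, by fun_prop, ?_, fun x i => by simp [hbp], hpcont, hconj, by fun_prop,
    fun x => funext (hequiv.apply_shift hB hk hreg x), fun hnil x => ?_⟩
  · ext y
    refine ⟨by rintro ⟨x, rfl⟩ t t' h; simp [h], fun hy => ⟨y ∘ p, funext fun t => ?_⟩⟩
    exact hy _ _ (hbp _)
  · exact (Function.LeftInverse.surjective hbp).injective_comp_right
  · have hiter (n : ℕ) : (fun x i => f (x ∘ b) (p i))^[n] x = fun i => f^[n] (x ∘ b) (p i) := by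
      funext i
      simpa [hbp] using congrFun (hconj.iterate_right n x) (p i)
    simp only [hiter]
    exact (hpcont.tendsto _).comp (hnil (x ∘ b))

/-- The map `φ : A^ℤ → A^V`, `φ(x)_t = x_{b t}`, is a
homeomorphism onto the set `Y` of configurations constant on Busemann levels
(with inverse `y ↦ (i ↦ y (p i))`); for any cellular automaton `f` on the
`k`-regular tree, `f̄ = φ⁻¹ ∘ f ∘ φ` is well defined, continuous, commutes with
the shift, and is asymptotically nilpotent whenever `f` is. -/
theorem conjugated_CA_on_busemann_levels
    {V A : Type*} [Finite A] [TopologicalSpace A] [DiscreteTopology A]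
    (k : ℕ) (hk : 2 ≤ k)
    (T : SimpleGraph V) (hconn : T.Connected) (hacyc : T.IsAcyclic)
    (hreg : ∀ v : V, Nat.card (T.neighborSet v) = k)
    (p : ℤ → V)
    (hadj : ∀ n : ℤ, T.Adj (p n) (p (n + 1)))
    (hpinj : ∀ n : ℤ, p n ≠ p (n + 2))
    (b : V → ℤ)
    (hb : ∀ t : V, ∀ᶠ n : ℕ in atTop, (T.dist (p (-(n : ℤ))) t : ℤ) - (n : ℤ) = b t)
    (z : A) (f : (V → A) → (V → A)) (hf : Continuous f)
    (hcomm : ∀ (g : T ≃g T) (x : V → A),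
      f (fun t => x (g.symm t)) = fun t => f x (g.symm t))
    (φ : (ℤ → A) → (V → A)) (hφ : ∀ (x : ℤ → A) (t : V), φ x t = x (b t))
    (fbar : (ℤ → A) → (ℤ → A))
    (hfbar : ∀ (x : ℤ → A) (i : ℤ), fbar x i = f (φ x) (p i)) :
    Set.range φ = {y : V → A | ∀ t t' : V, b t = b t' → y t = y t'} ∧
    Continuous φ ∧
    Function.Injective φ ∧
    (∀ (x : ℤ → A) (i : ℤ), φ x (p i) = x i) ∧
    Continuous (fun (y : V → A) (i : ℤ) => y (p i)) ∧
    (∀ x : ℤ → A, φ (fbar x) = f (φ x)) ∧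
    Continuous fbar ∧
    (∀ x : ℤ → A, fbar (fun i => x (i + 1)) = fun i => fbar x (i + 1)) ∧
    ((∀ x : V → A, Tendsto (fun n => f^[n] x) atTop (nhds (fun _ => z))) →
      ∀ x : ℤ → A, Tendsto (fun n => fbar^[n] x) atTop (nhds (fun _ => z))) :=
  conjugated_CA_on_busemann_levels_general k hk T hconn hacyc hreg p hadj hpinj b hb z f hf hcomm φ
    hφ fbar hfbar
end

section
/- Let T be a set, let A be a finite alphabet with the discrete topology, and let f : A^T → A^T be continuous with respect to the product topology. Then for every t ∈ T there exists a unique minimal finite set N(t) ⊆ T such that f(x)_t depends only on x restricted to N(t), i.e. for all x, y ∈ A^T, if x agrees with y on N(t) then f(x)_t = f(y)_t, and N(t) is contained in every set with this property. -/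
open Set

/-- Gluing `x` on `s` with `y` off `s` passes from `x` to `y` in two steps, each controlled by one
of the two sets. -/
theorem DependsOn.inter {ι β : Type*} {α : ι → Type*} {f : (Π i, α i) → β} {s t : Set ι}
    (hs : DependsOn f s) (ht : DependsOn f t) : DependsOn f (s ∩ t) := by
  classical
  intro x y hxy
  calc f x = f (s.piecewise x y) := hs fun i hi => (s.piecewise_eq_of_mem x y hi).symm
    _ = f y := ht fun i hi => by
      by_cases his : i ∈ s
      · simp [his, hxy i ⟨his, hi⟩]
      · simp [his]

/-- A compact product maps continuously to a discrete space only through finitely many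
coordinates: each fibre contains a basic cylinder around each of its points, and finitely many of
these cylinders cover the product. -/
theorem Continuous.exists_finite_dependsOn {ι β : Type*} {α : ι → Type*}
    [∀ i, TopologicalSpace (α i)] [CompactSpace (Π i, α i)] [TopologicalSpace β]
    [DiscreteTopology β] {g : (Π i, α i) → β} (hg : Continuous g) :
    ∃ s : Set ι, s.Finite ∧ DependsOn g s := by
  have hcyl : ∀ x, ∃ (I : Finset ι) (u : Π i, Set (α i)),
      (∀ i ∈ I, IsOpen (u i) ∧ x i ∈ u i) ∧ (I : Set ι).pi u ⊆ g ⁻¹' {g x} := fun x =>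
    isOpen_pi_iff.mp ((isOpen_discrete _).preimage hg) x rfl
  choose I u hu hfibre using hcyl
  obtain ⟨F, hF⟩ := isCompact_univ.elim_finite_subcover (fun x => (I x : Set ι).pi (u x))
    (fun x => isOpen_set_pi (I x).finite_toSet fun i hi => (hu x i hi).1)
    (fun x _ => mem_iUnion.mpr ⟨x, fun i hi => (hu x i hi).2⟩)
  refine ⟨⋃ x ∈ F, (I x : Set ι), F.finite_toSet.biUnion fun x _ => (I x).finite_toSet, ?_⟩
  intro y z hyz
  obtain ⟨x, hxF, hyx⟩ := mem_iUnion₂.mp (hF (mem_univ y))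
  have hzx : z ∈ (I x : Set ι).pi (u x) := fun i hi =>
    hyz i (mem_iUnion₂.mpr ⟨x, hxF, hi⟩) ▸ hyx i hi
  exact (hfibre x hyx).trans (hfibre x hzx).symm

/-- A minimal member of the family inside `s` exists by finiteness, and it is least because its
intersection with any other member is again a member. -/
theorem Set.Finite.exists_isLeast_of_inter_mem {ι : Type*} {S : Set (Set ι)}
    (hS : ∀ s ∈ S, ∀ t ∈ S, s ∩ t ∈ S) {s : Set ι} (hs : s.Finite) (hsS : s ∈ S) :
    ∃ m, IsLeast S m := by
  have hfin : {t | t ⊆ s ∧ t ∈ S}.Finite := hs.finite_subsets.subset fun _ ht => ht.1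
  obtain ⟨m, ⟨hms, hmS⟩, hmin⟩ := hfin.exists_minimal ⟨s, subset_rfl, hsS⟩
  refine ⟨m, hmS, fun t ht => ?_⟩
  have hm_inter : m ⊆ m ∩ t :=
    hmin ⟨inter_subset_left.trans hms, hS m hmS t ht⟩ inter_subset_left
  exact hm_inter.trans inter_subset_right

/-- A continuous map `f : A^T → A^T` (with `A` finite
discrete) has, at each coordinate `t`, a unique minimal finite neighborhood
`N ⊆ T`: `f(x)_t` depends only on `x|_N`, and `N` is contained in every set
with this property. -/
theorem minimal_neighborhood_exists_unique
    {T A : Type*} [Finite A] [TopologicalSpace A] [DiscreteTopology A]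
    (f : (T → A) → (T → A)) (hf : Continuous f) (t : T) :
    ∃! N : Set T, N.Finite ∧
      (∀ x y : T → A, (∀ u ∈ N, x u = y u) → f x t = f y t) ∧
      ∀ M : Set T, (∀ x y : T → A, (∀ u ∈ M, x u = y u) → f x t = f y t) →
        N ⊆ M := by
  obtain ⟨N₀, hN₀, hdep⟩ := ((continuous_apply t).comp hf).exists_finite_dependsOn
  obtain ⟨N, hN⟩ := hN₀.exists_isLeast_of_inter_mem (S := {M | DependsOn (f · t) M})
    (fun _ hM _ hM' => hM.inter hM') hdep
  -- The last two conjuncts of the claim unfold to `IsLeast {M | DependsOn (f · t) M} N`.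
  exact ⟨N, ⟨hN₀.subset (hN.2 hdep), hN⟩, fun N' hN' => (hN.unique hN'.2).symm⟩
end

section
/- Let T be a set, let A be a finite alphabet with distinguished symbol 0, and let f : A^T → A^T be continuous with respect to the product topology. Suppose f is asymptotically nilpotent toward 0^T, i.e. f^n(x) → 0^T for every x ∈ A^T. Then for every t ∈ T there exist m ∈ ℕ and a nonempty open set U ⊆ A^T such that f^n(x)_t = 0 for every x ∈ U and every n ≥ m. -/
open Filter

/-!
The sets `C m = {x | f^[n] x t = z for all n ≥ m}` are closed, since `f` is continuous and the
coordinate `t` takes values in a discrete space, and asymptotic nilpotency says that they cover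
`A^T`. As `A^T` is compact Hausdorff, hence a Baire space, some `C m` has nonempty interior.
-/

section Iterate

variable {X Y : Type*} [TopologicalSpace X] [TopologicalSpace Y] {f : X → X} {φ : X → Y}

theorem isClosed_setOf_forall_ge_iterate_eq [T1Space Y] (hf : Continuous f) (hφ : Continuous φ)
    (y : Y) (m : ℕ) : IsClosed {x | ∀ n ≥ m, φ (f^[n] x) = y} := by
  simp only [Set.ofPred_forall]
  exact isClosed_iInter fun n => isClosed_iInter fun _ =>
    isClosed_singleton.preimage (hφ.comp (hf.iterate n))

theorem exists_nonempty_interior_setOf_forall_ge_iterate_eq [BaireSpace X] [Nonempty X]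
    [T1Space Y] (hf : Continuous f) (hφ : Continuous φ) {y : Y}
    (h : ∀ x, ∀ᶠ n in atTop, φ (f^[n] x) = y) :
    ∃ m, (interior {x | ∀ n ≥ m, φ (f^[n] x) = y}).Nonempty := by
  refine nonempty_interior_of_iUnion_of_closed (isClosed_setOf_forall_ge_iterate_eq hf hφ y) ?_
  exact Set.eq_univ_of_forall fun x => Set.mem_iUnion.2 (eventually_atTop.1 (h x))

end Iterate

/-- If `f : A^T → A^T` is continuous and asymptotically
nilpotent toward the constant configuration `z`, then (by Baire category) for
every coordinate `t` there are a time `m` and a nonempty open set `U` of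
configurations whose coordinate `t` reads `z` at all times `≥ m`. -/
theorem baire_open_set_of_asymptotically_nilpotent
    {T A : Type*} [Finite A] [TopologicalSpace A] [DiscreteTopology A]
    (z : A) (f : (T → A) → (T → A)) (hf : Continuous f)
    (hnil : ∀ x : T → A,
      Tendsto (fun n => f^[n] x) atTop (nhds (fun _ => z))) :
    ∀ t : T, ∃ (m : ℕ) (U : Set (T → A)), IsOpen U ∧ U.Nonempty ∧
      ∀ x ∈ U, ∀ n ≥ m, f^[n] x t = z := by
  intro t
  have : Nonempty A := ⟨z⟩
  have hev (x : T → A) : ∀ᶠ n in atTop, f^[n] x t = z := by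
    have := ((continuous_apply t).tendsto _).comp (hnil x)
    rwa [nhds_discrete, tendsto_pure] at this
  obtain ⟨m, hm⟩ := exists_nonempty_interior_setOf_forall_ge_iterate_eq hf (continuous_apply t) hev
  exact ⟨m, _, isOpen_interior, hm, fun x hx => interior_subset hx⟩
end
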